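/- arXiv:0908.0604 — 8 statements merged into one kernel-verified Lean document; each statement's English description precedes it below -/
import Mathlib

section
/- Let k be a field, let (i_A, A₁, π_A) be a self-extension of a k-vector space A₀ and (i_B, B₁, π_B) a self-extension of a k-vector space B₀. Set F = {(u, v) ∈ (A₁ ⊗ B₀) × (A₀ ⊗ B₁) : (π_A ⊗ id_{B₀}) u = (id_{A₀} ⊗ π_B) v}, N₋ = {((i_A ⊗ id_{B₀}) w, −(id_{A₀} ⊗ i_B) w) : w ∈ A₀ ⊗ B₀} and N₊ = {((i_A ⊗ id_{B₀}) w, (id_{A₀} ⊗ i_B) w) : w ∈ A₀ ⊗ B₀} (both submodules of F; all tensor products over k). Then: (1) the linear map F → A₁ ⊗ B₁, (u, v) ↦ (i_A ⊗ id_{B₁}) v − (id_{A₁} ⊗ i_B) u, vanishes on N₊, and the induced map ι : F ⧸ N₊ → A₁ ⊗ B₁ is injective; (2) for every x ∈ A₁ ⊗ B₁ the pair ((id_{A₁} ⊗ π_B) x, (π_A ⊗ id_{B₁}) x) lies in F, and the resulting linear map π : A₁ ⊗ B₁ → F ⧸ N₋ is surjective; (3) ker π = range ι. In other words, 0 → F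 ⧸ N₊ → A₁ ⊗ B₁ → F ⧸ N₋ → 0 is a short exact sequence. -/
open scoped TensorProduct

/-!
A diagram chase in the square of tensor products `Aᵢ ⊗ Bⱼ`: tensoring the two extensions with any
module is right exact, and `iA ⊗ 1` stays injective because `B₀` and `B₁` are flat.
The map `x ↦ ((1 ⊗ πB) x, (πA ⊗ 1) x)` is onto `F` already, so `π` is surjective.
If `(iA ⊗ 1) v = (1 ⊗ iB) u` with `(u, v) ∈ F`, applying `1 ⊗ πB` shows `(πA ⊗ 1) u = 0`, so `u`
and then `v` come from one `w ∈ A₀ ⊗ B₀`: the kernel of `g` is `N₊`.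
Finally, if `π x = 0`, say `(1 ⊗ πB) x = (iA ⊗ 1) w` and `(πA ⊗ 1) x = -(1 ⊗ iB) w`, lift
`w = (πA ⊗ 1) u`; then `x + (1 ⊗ iB) u` is killed by `πA ⊗ 1`, hence equals `(iA ⊗ 1) v`, and
`x = g (u, v)`.
-/

open LinearMap (lTensor rTensor)
open Function (Exact Injective Surjective)

theorem LinearMap.rTensor_lTensor_comm_apply {R M N P Q : Type*} [CommSemiring R]
    [AddCommMonoid M] [AddCommMonoid N] [AddCommMonoid P] [AddCommMonoid Q]
    [Module R M] [Module R N] [Module R P] [Module R Q]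
    (f : M →ₗ[R] P) (g : N →ₗ[R] Q) (x : M ⊗[R] N) :
    rTensor Q f (lTensor M g x) = lTensor P g (rTensor N f x) := by
  rw [← LinearMap.comp_apply, rTensor_comp_lTensor, ← lTensor_comp_rTensor, LinearMap.comp_apply]

section

variable {R M N P Q : Type*} [CommSemiring R]
    [AddCommMonoid M] [AddCommMonoid N] [AddCommMonoid P] [AddCommMonoid Q]
    [Module R M] [Module R N] [Module R P] [Module R Q] {f : N →ₗ[R] P} {g : P →ₗ[R] Q}

theorem Function.Exact.lTensor_lTensor_eq_zero (h : Exact f g) (x : M ⊗[R] N) :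
    lTensor M g (lTensor M f x) = 0 := by
  rw [← LinearMap.lTensor_comp_apply, h.linearMap_comp_eq_zero, LinearMap.lTensor_zero,
    LinearMap.zero_apply]

theorem Function.Exact.rTensor_rTensor_eq_zero (h : Exact f g) (x : N ⊗[R] M) :
    rTensor M g (rTensor M f x) = 0 := by
  rw [← LinearMap.rTensor_comp_apply, h.linearMap_comp_eq_zero, LinearMap.rTensor_zero,
    LinearMap.zero_apply]

end

section

variable {R A₀ A₁ B₀ B₁ : Type*} [CommRing R]
    [AddCommGroup A₀] [AddCommGroup A₁] [AddCommGroup B₀] [AddCommGroup B₁]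
    [Module R A₀] [Module R A₁] [Module R B₀] [Module R B₁]
    {iA : A₀ →ₗ[R] A₁} {πA : A₁ →ₗ[R] A₀} {iB : B₀ →ₗ[R] B₁} {πB : B₁ →ₗ[R] B₀}

theorem exists_lTensor_eq_and_rTensor_eq (hπA : Surjective πA) (hB : Exact iB πB)
    (hπB : Surjective πB) {u : A₁ ⊗[R] B₀} {v : A₀ ⊗[R] B₁}
    (huv : rTensor B₀ πA u = lTensor A₀ πB v) :
    ∃ x : A₁ ⊗[R] B₁, lTensor A₁ πB x = u ∧ rTensor B₁ πA x = v := by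
  obtain ⟨x₀, rfl⟩ := LinearMap.lTensor_surjective A₁ hπB u
  have hdefect : lTensor A₀ πB (rTensor B₁ πA x₀ - v) = 0 := by
    rw [map_sub, ← LinearMap.rTensor_lTensor_comm_apply, huv, sub_self]
  obtain ⟨e, he⟩ := (lTensor_exact A₀ hB hπB _).mp hdefect
  obtain ⟨t, rfl⟩ := LinearMap.rTensor_surjective B₀ hπA e
  refine ⟨x₀ - lTensor A₁ iB t, ?_, ?_⟩
  · rw [map_sub, hB.lTensor_lTensor_eq_zero, sub_zero]
  · rw [map_sub, LinearMap.rTensor_lTensor_comm_apply, he, sub_sub_cancel]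

variable [Module.Flat R B₀]

theorem exists_lTensor_eq_rTensor_and_rTensor_eq_neg_iff (hiA : Injective iA)
    (hA : Exact iA πA) (hπA : Surjective πA) (hB : Exact iB πB) (x : A₁ ⊗[R] B₁) :
    (∃ w : A₀ ⊗[R] B₀, lTensor A₁ πB x = rTensor B₀ iA w ∧ rTensor B₁ πA x = -lTensor A₀ iB w) ↔
      ∃ u v, rTensor B₀ πA u = lTensor A₀ πB v ∧ rTensor B₁ iA v - lTensor A₁ iB u = x := by
  constructor
  · rintro ⟨w, hw₁, hw₂⟩
    obtain ⟨u, rfl⟩ := LinearMap.rTensor_surjective B₀ hπA w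
    have hlift : rTensor B₁ πA (x + lTensor A₁ iB u) = 0 := by
      rw [map_add, hw₂, LinearMap.rTensor_lTensor_comm_apply, neg_add_cancel]
    obtain ⟨v, hv⟩ := (rTensor_exact B₁ hA hπA _).mp hlift
    refine ⟨u, v, ?_, by rw [hv, add_sub_cancel_right]⟩
    apply Module.Flat.rTensor_preserves_injective_linearMap (M := B₀) iA hiA
    rw [← hw₁, LinearMap.rTensor_lTensor_comm_apply, hv, map_add, hB.lTensor_lTensor_eq_zero,
      add_zero]
  · rintro ⟨u, v, huv, rfl⟩
    refine ⟨lTensor A₀ πB v, ?_, ?_⟩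
    · rw [map_sub, hB.lTensor_lTensor_eq_zero, sub_zero, LinearMap.rTensor_lTensor_comm_apply]
    · rw [map_sub, hA.rTensor_rTensor_eq_zero, zero_sub, LinearMap.rTensor_lTensor_comm_apply, huv]

variable [Module.Flat R B₁]

theorem rTensor_eq_lTensor_iff (hiA : Injective iA) (hA : Exact iA πA) (hπA : Surjective πA)
    (hB : Exact iB πB) {u : A₁ ⊗[R] B₀} {v : A₀ ⊗[R] B₁}
    (huv : rTensor B₀ πA u = lTensor A₀ πB v) :
    rTensor B₁ iA v = lTensor A₁ iB u ↔
      ∃ w : A₀ ⊗[R] B₀, rTensor B₀ iA w = u ∧ lTensor A₀ iB w = v := by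
  constructor
  · intro h
    have hv : lTensor A₀ πB v = 0 := by
      apply Module.Flat.rTensor_preserves_injective_linearMap (M := B₀) iA hiA
      rw [LinearMap.rTensor_lTensor_comm_apply, h, hB.lTensor_lTensor_eq_zero, map_zero]
    obtain ⟨w, rfl⟩ := (rTensor_exact B₀ hA hπA u).mp (huv.trans hv)
    refine ⟨w, rfl, ?_⟩
    apply Module.Flat.rTensor_preserves_injective_linearMap (M := B₁) iA hiA
    rw [h, LinearMap.rTensor_lTensor_comm_apply]
  · rintro ⟨w, rfl, rfl⟩
    exact LinearMap.rTensor_lTensor_comm_apply iA iB w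

end

theorem tensor_yoneda_exact_sequence_general
    {k A₀ A₁ B₀ B₁ : Type*} [Field k]
    [AddCommGroup A₀] [AddCommGroup A₁] [AddCommGroup B₀] [AddCommGroup B₁]
    [Module k A₀] [Module k A₁] [Module k B₀] [Module k B₁]
    (iA : A₀ →ₗ[k] A₁) (πA : A₁ →ₗ[k] A₀)
    (iB : B₀ →ₗ[k] B₁) (πB : B₁ →ₗ[k] B₀)
    (hiA : Function.Injective iA) (hπA : Function.Surjective πA)
    (hA : LinearMap.range iA = LinearMap.ker πA)
    (hπB : Function.Surjective πB)
    (hB : LinearMap.range iB = LinearMap.ker πB)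
    (F : Submodule k ((A₁ ⊗[k] B₀) × (A₀ ⊗[k] B₁)))
    (hF : ∀ y : (A₁ ⊗[k] B₀) × (A₀ ⊗[k] B₁), y ∈ F ↔
      TensorProduct.map πA (LinearMap.id : B₀ →ₗ[k] B₀) y.1
        = TensorProduct.map (LinearMap.id : A₀ →ₗ[k] A₀) πB y.2)
    (Nminus : Submodule k F)
    (hNminus : ∀ y : F, y ∈ Nminus ↔ ∃ w : A₀ ⊗[k] B₀,
      (y : (A₁ ⊗[k] B₀) × (A₀ ⊗[k] B₁))
        = (TensorProduct.map iA (LinearMap.id : B₀ →ₗ[k] B₀) w,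
           -(TensorProduct.map (LinearMap.id : A₀ →ₗ[k] A₀) iB w)))
    (Nplus : Submodule k F)
    (hNplus : ∀ y : F, y ∈ Nplus ↔ ∃ w : A₀ ⊗[k] B₀,
      (y : (A₁ ⊗[k] B₀) × (A₀ ⊗[k] B₁))
        = (TensorProduct.map iA (LinearMap.id : B₀ →ₗ[k] B₀) w,
           TensorProduct.map (LinearMap.id : A₀ →ₗ[k] A₀) iB w)) :
    -- (1) the map `(u,v) ↦ (iA ⊗ id) v - (id ⊗ iB) u` kills `N₊` and the
    --     induced map `ι : F ⧸ N₊ → A₁ ⊗ B₁` is injective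
    ∃ g : F →ₗ[k] (A₁ ⊗[k] B₁),
      (∀ y : F, g y =
        TensorProduct.map iA (LinearMap.id : B₁ →ₗ[k] B₁)
            (y : (A₁ ⊗[k] B₀) × (A₀ ⊗[k] B₁)).2
          - TensorProduct.map (LinearMap.id : A₁ →ₗ[k] A₁) iB
            (y : (A₁ ⊗[k] B₀) × (A₀ ⊗[k] B₁)).1) ∧
      (∀ y : F, y ∈ Nplus → g y = 0) ∧
      ∃ ι : (F ⧸ Nplus) →ₗ[k] (A₁ ⊗[k] B₁),
        (∀ y : F, ι (Nplus.mkQ y) = g y) ∧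
        Function.Injective ι ∧
        -- (2) `x ↦ ((id ⊗ πB) x, (πA ⊗ id) x)` lands in `F` and the resulting
        --     map `π : A₁ ⊗ B₁ → F ⧸ N₋` is surjective
        ∃ (hmem : ∀ x : A₁ ⊗[k] B₁,
            ((TensorProduct.map (LinearMap.id : A₁ →ₗ[k] A₁) πB x,
              TensorProduct.map πA (LinearMap.id : B₁ →ₗ[k] B₁) x) :
              (A₁ ⊗[k] B₀) × (A₀ ⊗[k] B₁)) ∈ F)
          (π : (A₁ ⊗[k] B₁) →ₗ[k] (F ⧸ Nminus)),
          (∀ x : A₁ ⊗[k] B₁, π x = Nminus.mkQ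
            ⟨(TensorProduct.map (LinearMap.id : A₁ →ₗ[k] A₁) πB x,
              TensorProduct.map πA (LinearMap.id : B₁ →ₗ[k] B₁) x), hmem x⟩) ∧
          Function.Surjective π ∧
          -- (3) exactness in the middle
          LinearMap.ker π = LinearMap.range ι := by
  replace hF : ∀ y, y ∈ F ↔ rTensor B₀ πA y.1 = lTensor A₀ πB y.2 := hF
  replace hNminus : ∀ y : F, y ∈ Nminus ↔
      ∃ w, (y : (A₁ ⊗[k] B₀) × (A₀ ⊗[k] B₁)) = (rTensor B₀ iA w, -lTensor A₀ iB w) := hNminus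
  replace hNplus : ∀ y : F, y ∈ Nplus ↔
      ∃ w, (y : (A₁ ⊗[k] B₀) × (A₀ ⊗[k] B₁)) = (rTensor B₀ iA w, lTensor A₀ iB w) := hNplus
  have hexA : Exact iA πA := LinearMap.exact_iff.mpr hA.symm
  have hexB : Exact iB πB := LinearMap.exact_iff.mpr hB.symm
  let g : F →ₗ[k] A₁ ⊗[k] B₁ :=
    (rTensor B₁ iA ∘ₗ LinearMap.snd k _ _ - lTensor A₁ iB ∘ₗ LinearMap.fst k _ _) ∘ₗ F.subtype
  have hker : LinearMap.ker g = Nplus := by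
    ext ⟨⟨u, v⟩, huv⟩
    rw [LinearMap.mem_ker, hNplus]
    simpa [g, sub_eq_zero, eq_comm (a := u), eq_comm (a := v)] using
      rTensor_eq_lTensor_iff hiA hexA hπA hexB ((hF _).1 huv)
  have hmem (x : A₁ ⊗[k] B₁) : (lTensor A₁ πB x, rTensor B₁ πA x) ∈ F :=
    (hF _).2 (LinearMap.rTensor_lTensor_comm_apply πA πB x)
  let P : A₁ ⊗[k] B₁ →ₗ[k] F := ((lTensor A₁ πB).prod (rTensor B₁ πA)).codRestrict F hmem
  have hP : Surjective P := by
    rintro ⟨⟨u, v⟩, huv⟩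
    obtain ⟨x, hu, hv⟩ := exists_lTensor_eq_and_rTensor_eq hπA hexB hπB ((hF _).1 huv)
    exact ⟨x, Subtype.ext (Prod.ext hu hv)⟩
  refine ⟨g, fun _ => rfl, fun y hy => hker.ge hy, Nplus.liftQ g hker.ge, fun _ => rfl,
    LinearMap.ker_eq_bot.1 (Submodule.ker_liftQ_eq_bot' _ _ hker.symm), hmem, Nminus.mkQ ∘ₗ P,
    fun _ => rfl, Nminus.mkQ_surjective.comp hP, ?_⟩
  ext x
  rw [LinearMap.mem_ker, Submodule.range_liftQ, LinearMap.comp_apply, Submodule.mkQ_apply,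
    Submodule.Quotient.mk_eq_zero, hNminus, LinearMap.range_comp, Submodule.range_subtype,
    Submodule.mem_map]
  simp only [Prod.ext_iff, Prod.exists, hF]
  exact exists_lTensor_eq_rTensor_and_rTensor_eq_neg_iff hiA hexA hπA hexB x

/-- **The exact sequence `0 → (A ⊗ T(B))₁ → A₁ ⊗ B₁ → (A ⊗ B)₁ → 0`.**
For self-extensions `A = (iA, A₁, πA)` of `A₀` and `B = (iB, B₁, πB)` of `B₀`
over a field `k`, with
`F = {(u,v) | (πA ⊗ id) u = (id ⊗ πB) v} ⊆ (A₁ ⊗ B₀) × (A₀ ⊗ B₁)`,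
`N₋ = {((iA ⊗ id) w, -(id ⊗ iB) w)}` and `N₊ = {((iA ⊗ id) w, (id ⊗ iB) w)}`,
the sequence `0 → F ⧸ N₊ → A₁ ⊗ B₁ → F ⧸ N₋ → 0` is short exact. -/
theorem tensor_yoneda_exact_sequence
    {k A₀ A₁ B₀ B₁ : Type*} [Field k]
    [AddCommGroup A₀] [AddCommGroup A₁] [AddCommGroup B₀] [AddCommGroup B₁]
    [Module k A₀] [Module k A₁] [Module k B₀] [Module k B₁]
    (iA : A₀ →ₗ[k] A₁) (πA : A₁ →ₗ[k] A₀)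
    (iB : B₀ →ₗ[k] B₁) (πB : B₁ →ₗ[k] B₀)
    (hiA : Function.Injective iA) (hπA : Function.Surjective πA)
    (hA : LinearMap.range iA = LinearMap.ker πA)
    (hiB : Function.Injective iB) (hπB : Function.Surjective πB)
    (hB : LinearMap.range iB = LinearMap.ker πB)
    (F : Submodule k ((A₁ ⊗[k] B₀) × (A₀ ⊗[k] B₁)))
    (hF : ∀ y : (A₁ ⊗[k] B₀) × (A₀ ⊗[k] B₁), y ∈ F ↔
      TensorProduct.map πA (LinearMap.id : B₀ →ₗ[k] B₀) y.1
        = TensorProduct.map (LinearMap.id : A₀ →ₗ[k] A₀) πB y.2)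
    (Nminus : Submodule k F)
    (hNminus : ∀ y : F, y ∈ Nminus ↔ ∃ w : A₀ ⊗[k] B₀,
      (y : (A₁ ⊗[k] B₀) × (A₀ ⊗[k] B₁))
        = (TensorProduct.map iA (LinearMap.id : B₀ →ₗ[k] B₀) w,
           -(TensorProduct.map (LinearMap.id : A₀ →ₗ[k] A₀) iB w)))
    (Nplus : Submodule k F)
    (hNplus : ∀ y : F, y ∈ Nplus ↔ ∃ w : A₀ ⊗[k] B₀,
      (y : (A₁ ⊗[k] B₀) × (A₀ ⊗[k] B₁))
        = (TensorProduct.map iA (LinearMap.id : B₀ →ₗ[k] B₀) w,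
           TensorProduct.map (LinearMap.id : A₀ →ₗ[k] A₀) iB w)) :
    -- (1) the map `(u,v) ↦ (iA ⊗ id) v - (id ⊗ iB) u` kills `N₊` and the
    --     induced map `ι : F ⧸ N₊ → A₁ ⊗ B₁` is injective
    ∃ g : F →ₗ[k] (A₁ ⊗[k] B₁),
      (∀ y : F, g y =
        TensorProduct.map iA (LinearMap.id : B₁ →ₗ[k] B₁)
            (y : (A₁ ⊗[k] B₀) × (A₀ ⊗[k] B₁)).2
          - TensorProduct.map (LinearMap.id : A₁ →ₗ[k] A₁) iB
            (y : (A₁ ⊗[k] B₀) × (A₀ ⊗[k] B₁)).1) ∧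
      (∀ y : F, y ∈ Nplus → g y = 0) ∧
      ∃ ι : (F ⧸ Nplus) →ₗ[k] (A₁ ⊗[k] B₁),
        (∀ y : F, ι (Nplus.mkQ y) = g y) ∧
        Function.Injective ι ∧
        -- (2) `x ↦ ((id ⊗ πB) x, (πA ⊗ id) x)` lands in `F` and the resulting
        --     map `π : A₁ ⊗ B₁ → F ⧸ N₋` is surjective
        ∃ (hmem : ∀ x : A₁ ⊗[k] B₁,
            ((TensorProduct.map (LinearMap.id : A₁ →ₗ[k] A₁) πB x,
              TensorProduct.map πA (LinearMap.id : B₁ →ₗ[k] B₁) x) :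
              (A₁ ⊗[k] B₀) × (A₀ ⊗[k] B₁)) ∈ F)
          (π : (A₁ ⊗[k] B₁) →ₗ[k] (F ⧸ Nminus)),
          (∀ x : A₁ ⊗[k] B₁, π x = Nminus.mkQ
            ⟨(TensorProduct.map (LinearMap.id : A₁ →ₗ[k] A₁) πB x,
              TensorProduct.map πA (LinearMap.id : B₁ →ₗ[k] B₁) x), hmem x⟩) ∧
          Function.Surjective π ∧
          -- (3) exactness in the middle
          LinearMap.ker π = LinearMap.range ι :=
  tensor_yoneda_exact_sequence_general iA πA iB πB hiA hπA hA hπB hB F hF Nminus hNminus Nplus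
    hNplus
end

section
/- Let k be a field, let (i_A, A₁, π_A) be a self-extension of a k-vector space A₀ and (i_B, B₁, π_B) a self-extension of a k-vector space B₀. Set F = {(u, v) ∈ (A₁ ⊗ B₀) × (A₀ ⊗ B₁) : (π_A ⊗ id_{B₀}) u = (id_{A₀} ⊗ π_B) v}. Then the kernel of the k-linear map F → A₁ ⊗ B₁ given by (u, v) ↦ (i_A ⊗ id_{B₁}) v − (id_{A₁} ⊗ i_B) u is exactly the submodule N₊ = {((i_A ⊗ id_{B₀}) w, (id_{A₀} ⊗ i_B) w) : w ∈ A₀ ⊗ B₀}. -/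
/-!
Over a field every module is flat, so tensoring preserves both injectivity and exactness.
If `(iA ⊗ id) v = (id ⊗ iB) u`, applying `πA ⊗ id` kills the left-hand side, so
`(id ⊗ iB) ((πA ⊗ id) u) = 0` and hence `(πA ⊗ id) u = 0`. Exactness of `A₀ → A₁ → A₀` tensored
with `B₀` then gives `u = (iA ⊗ id) w`, and injectivity of `iA ⊗ id` forces `v = (id ⊗ iB) w`.
-/

open scoped TensorProduct
open LinearMap

section
variable {R A₀ A₁ A₂ B₀ B₁ : Type*} [CommRing R]
  [AddCommGroup A₀] [AddCommGroup A₁] [AddCommGroup A₂] [AddCommGroup B₀] [AddCommGroup B₁]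
  [Module R A₀] [Module R A₁] [Module R A₂] [Module R B₀] [Module R B₁]
  {iA : A₀ →ₗ[R] A₁} {πA : A₁ →ₗ[R] A₂} {iB : B₀ →ₗ[R] B₁}

theorem rTensor_lTensor_apply_comm (w : A₀ ⊗[R] B₀) :
    iA.rTensor B₁ (iB.lTensor A₀ w) = iB.lTensor A₁ (iA.rTensor B₀ w) := by
  rw [← comp_apply, ← comp_apply, rTensor_comp_lTensor, lTensor_comp_rTensor]

theorem rTensor_eq_zero_of_rTensor_eq_lTensor [Module.Flat R A₂]
    (hA : Function.Exact iA πA) (hiB : Function.Injective iB)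
    {u : A₁ ⊗[R] B₀} {v : A₀ ⊗[R] B₁} (h : iA.rTensor B₁ v = iB.lTensor A₁ u) :
    πA.rTensor B₀ u = 0 := by
  apply Module.Flat.lTensor_preserves_injective_linearMap (M := A₂) iB hiB
  calc iB.lTensor A₂ (πA.rTensor B₀ u) = πA.rTensor B₁ (iB.lTensor A₁ u) := by
        rw [← comp_apply, ← comp_apply, rTensor_comp_lTensor, lTensor_comp_rTensor]
    _ = (πA ∘ₗ iA).rTensor B₁ v := by rw [← h, rTensor_comp_apply]
    _ = iB.lTensor A₂ 0 := by
        rw [hA.linearMap_comp_eq_zero, rTensor_zero, LinearMap.zero_apply, map_zero]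

theorem rTensor_eq_lTensor_iff_exists [Module.Flat R A₂] [Module.Flat R B₀] [Module.Flat R B₁]
    (hA : Function.Exact iA πA) (hiA : Function.Injective iA) (hiB : Function.Injective iB)
    {u : A₁ ⊗[R] B₀} {v : A₀ ⊗[R] B₁} :
    iA.rTensor B₁ v = iB.lTensor A₁ u ↔ ∃ w, iA.rTensor B₀ w = u ∧ iB.lTensor A₀ w = v := by
  constructor
  · intro h
    obtain ⟨w, rfl⟩ :=
      (Module.Flat.rTensor_exact B₀ hA u).mp (rTensor_eq_zero_of_rTensor_eq_lTensor hA hiB h)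
    refine ⟨w, rfl, Module.Flat.rTensor_preserves_injective_linearMap iA hiA ?_⟩
    rw [h, rTensor_lTensor_apply_comm]
  · rintro ⟨w, rfl, rfl⟩
    exact rTensor_lTensor_apply_comm w

end

theorem kernel_eq_Nplus_general
    {k A₀ A₁ B₀ B₁ : Type*} [Field k]
    [AddCommGroup A₀] [AddCommGroup A₁] [AddCommGroup B₀] [AddCommGroup B₁]
    [Module k A₀] [Module k A₁] [Module k B₀] [Module k B₁]
    (iA : A₀ →ₗ[k] A₁) (πA : A₁ →ₗ[k] A₀)
    (iB : B₀ →ₗ[k] B₁)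
    (hiA : Function.Injective iA)
    (hA : LinearMap.range iA = LinearMap.ker πA)
    (hiB : Function.Injective iB)
    (F : Submodule k ((A₁ ⊗[k] B₀) × (A₀ ⊗[k] B₁)))
    (Nplus : Submodule k F)
    (hNplus : ∀ y : F, y ∈ Nplus ↔ ∃ w : A₀ ⊗[k] B₀,
      (y : (A₁ ⊗[k] B₀) × (A₀ ⊗[k] B₁))
        = (TensorProduct.map iA (LinearMap.id : B₀ →ₗ[k] B₀) w,
           TensorProduct.map (LinearMap.id : A₀ →ₗ[k] A₀) iB w))
    (g : F →ₗ[k] (A₁ ⊗[k] B₁))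
    (hg : ∀ y : F, g y =
      TensorProduct.map iA (LinearMap.id : B₁ →ₗ[k] B₁)
          (y : (A₁ ⊗[k] B₀) × (A₀ ⊗[k] B₁)).2
        - TensorProduct.map (LinearMap.id : A₁ →ₗ[k] A₁) iB
          (y : (A₁ ⊗[k] B₀) × (A₀ ⊗[k] B₁)).1) :
    LinearMap.ker g = Nplus := by
  ext y
  rw [LinearMap.mem_ker, hg, sub_eq_zero, hNplus]
  refine (rTensor_eq_lTensor_iff_exists (LinearMap.exact_iff.mpr hA.symm) hiA hiB).trans ?_
  simp only [Prod.ext_iff, eq_comm]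
  rfl

/-- **Injectivity part of the exact-sequence lemma.**
For self-extensions `A`, `B` over a field `k`, the kernel of the map
`F → A₁ ⊗ B₁`, `(u,v) ↦ (iA ⊗ id) v - (id ⊗ iB) u`, is exactly the submodule
`N₊ = {((iA ⊗ id) w, (id ⊗ iB) w) | w : A₀ ⊗ B₀}`. -/
theorem kernel_eq_Nplus
    {k A₀ A₁ B₀ B₁ : Type*} [Field k]
    [AddCommGroup A₀] [AddCommGroup A₁] [AddCommGroup B₀] [AddCommGroup B₁]
    [Module k A₀] [Module k A₁] [Module k B₀] [Module k B₁]
    (iA : A₀ →ₗ[k] A₁) (πA : A₁ →ₗ[k] A₀)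
    (iB : B₀ →ₗ[k] B₁) (πB : B₁ →ₗ[k] B₀)
    (hiA : Function.Injective iA) (hπA : Function.Surjective πA)
    (hA : LinearMap.range iA = LinearMap.ker πA)
    (hiB : Function.Injective iB) (hπB : Function.Surjective πB)
    (hB : LinearMap.range iB = LinearMap.ker πB)
    (F : Submodule k ((A₁ ⊗[k] B₀) × (A₀ ⊗[k] B₁)))
    (hF : ∀ y : (A₁ ⊗[k] B₀) × (A₀ ⊗[k] B₁), y ∈ F ↔
      TensorProduct.map πA (LinearMap.id : B₀ →ₗ[k] B₀) y.1
        = TensorProduct.map (LinearMap.id : A₀ →ₗ[k] A₀) πB y.2)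
    (Nplus : Submodule k F)
    (hNplus : ∀ y : F, y ∈ Nplus ↔ ∃ w : A₀ ⊗[k] B₀,
      (y : (A₁ ⊗[k] B₀) × (A₀ ⊗[k] B₁))
        = (TensorProduct.map iA (LinearMap.id : B₀ →ₗ[k] B₀) w,
           TensorProduct.map (LinearMap.id : A₀ →ₗ[k] A₀) iB w))
    (g : F →ₗ[k] (A₁ ⊗[k] B₁))
    (hg : ∀ y : F, g y =
      TensorProduct.map iA (LinearMap.id : B₁ →ₗ[k] B₁)
          (y : (A₁ ⊗[k] B₀) × (A₀ ⊗[k] B₁)).2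
        - TensorProduct.map (LinearMap.id : A₁ →ₗ[k] A₁) iB
          (y : (A₁ ⊗[k] B₀) × (A₀ ⊗[k] B₁)).1) :
    LinearMap.ker g = Nplus :=
  kernel_eq_Nplus_general iA πA iB hiA hA hiB F Nplus hNplus g hg
end

section
/- Let R be a commutative ring, let (i_A, A₁, π_A) be a self-extension of an R-module A₀ and (i_B, B₁, π_B) a self-extension of an R-module B₀. Then the image of the R-linear map A₁ ⊗ B₁ → (A₀ ⊗ B₁) × (A₁ ⊗ B₀), x ↦ ((π_A ⊗ id_{B₁}) x, (id_{A₁} ⊗ π_B) x), is exactly the fiber product U = {(y, z) ∈ (A₀ ⊗ B₁) × (A₁ ⊗ B₀) : (id_{A₀} ⊗ π_B) y = (π_A ⊗ id_{B₀}) z}; in particular, the induced map A₁ ⊗ B₁ → U is surjective. -/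
open scoped TensorProduct

open LinearMap

section FiberProduct

variable {R M₀ M₁ N₀ N₁ : Type*} [CommRing R]
  [AddCommGroup M₀] [AddCommGroup M₁] [AddCommGroup N₀] [AddCommGroup N₁]
  [Module R M₀] [Module R M₁] [Module R N₀] [Module R N₁]
  {g : M₁ →ₗ[R] M₀} {h : N₁ →ₗ[R] N₀}

theorem lTensor_rTensor_comm_apply (g : M₁ →ₗ[R] M₀) (h : N₁ →ₗ[R] N₀) (x : M₁ ⊗[R] N₁) :
    lTensor M₀ h (rTensor N₁ g x) = rTensor N₀ g (lTensor M₁ h x) := by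
  rw [← comp_apply, ← comp_apply, lTensor_comp_rTensor, rTensor_comp_lTensor]

/-- By right exactness, `d` comes from `ker g ⊗ N₀`; lift it through the surjection
`ker g ⊗ N₁ → ker g ⊗ N₀` and push the lift into `M₁ ⊗ N₁`. -/
theorem exists_rTensor_eq_zero_lTensor_eq (hg : Function.Surjective g)
    (hh : Function.Surjective h) {d : M₁ ⊗[R] N₀} (hd : rTensor N₀ g d = 0) :
    ∃ v : M₁ ⊗[R] N₁, rTensor N₁ g v = 0 ∧ lTensor M₁ h v = d := by
  obtain ⟨w, rfl⟩ := (rTensor_exact N₀ (exact_subtype_ker_map g) hg d).1 hd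
  obtain ⟨u, rfl⟩ := lTensor_surjective (ker g) hh w
  refine ⟨rTensor N₁ (ker g).subtype u, ?_, lTensor_rTensor_comm_apply _ _ u⟩
  rw [← rTensor_comp_apply, comp_ker_subtype, rTensor_zero, LinearMap.zero_apply]

theorem exists_rTensor_eq_lTensor_eq (hg : Function.Surjective g) (hh : Function.Surjective h)
    {y : M₀ ⊗[R] N₁} {z : M₁ ⊗[R] N₀} (hyz : lTensor M₀ h y = rTensor N₀ g z) :
    ∃ x : M₁ ⊗[R] N₁, rTensor N₁ g x = y ∧ lTensor M₁ h x = z := by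
  obtain ⟨x, rfl⟩ := rTensor_surjective N₁ hg y
  have hd : rTensor N₀ g (z - lTensor M₁ h x) = 0 := by
    rw [map_sub, ← hyz, lTensor_rTensor_comm_apply, sub_self]
  obtain ⟨v, hv₀, hv⟩ := exists_rTensor_eq_zero_lTensor_eq hg hh hd
  exact ⟨x + v, by rw [map_add, hv₀, add_zero], by rw [map_add, hv, add_sub_cancel]⟩

end FiberProduct

theorem range_eq_fiber_product_general
    {R A₀ A₁ B₀ B₁ : Type*} [CommRing R]
    [AddCommGroup A₀] [AddCommGroup A₁] [AddCommGroup B₀] [AddCommGroup B₁]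
    [Module R A₀] [Module R A₁] [Module R B₀] [Module R B₁]
    (πA : A₁ →ₗ[R] A₀)
    (πB : B₁ →ₗ[R] B₀)
    (hπA : Function.Surjective πA)
    (hπB : Function.Surjective πB)
    (f : (A₁ ⊗[R] B₁) →ₗ[R] (A₀ ⊗[R] B₁) × (A₁ ⊗[R] B₀))
    (hf : ∀ x : A₁ ⊗[R] B₁, f x =
      (TensorProduct.map πA (LinearMap.id : B₁ →ₗ[R] B₁) x,
       TensorProduct.map (LinearMap.id : A₁ →ₗ[R] A₁) πB x))
    (U : Submodule R ((A₀ ⊗[R] B₁) × (A₁ ⊗[R] B₀)))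
    (hU : ∀ y : (A₀ ⊗[R] B₁) × (A₁ ⊗[R] B₀), y ∈ U ↔
      TensorProduct.map (LinearMap.id : A₀ →ₗ[R] A₀) πB y.1
        = TensorProduct.map πA (LinearMap.id : B₀ →ₗ[R] B₀) y.2) :
    LinearMap.range f = U := by
  ext ⟨y, z⟩
  rw [hU, mem_range]
  constructor
  · rintro ⟨x, hx⟩
    rw [hf, Prod.ext_iff] at hx
    rw [← hx.1, ← hx.2]
    exact lTensor_rTensor_comm_apply πA πB x
  · intro hyz
    obtain ⟨x, hx₁, hx₂⟩ := exists_rTensor_eq_lTensor_eq hπA hπB hyz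
    exact ⟨x, by rw [hf]; exact Prod.ext hx₁ hx₂⟩

/-- **Surjectivity onto the fiber product.**
For self-extensions `A = (iA, A₁, πA)` of `A₀` and `B = (iB, B₁, πB)` of `B₀`
over a commutative ring `R`, the range of
`A₁ ⊗ B₁ → (A₀ ⊗ B₁) × (A₁ ⊗ B₀)`, `x ↦ ((πA ⊗ id) x, (id ⊗ πB) x)`, is
exactly the fiber product `U = {(y,z) | (id ⊗ πB) y = (πA ⊗ id) z}`. -/
theorem range_eq_fiber_product
    {R A₀ A₁ B₀ B₁ : Type*} [CommRing R]
    [AddCommGroup A₀] [AddCommGroup A₁] [AddCommGroup B₀] [AddCommGroup B₁]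
    [Module R A₀] [Module R A₁] [Module R B₀] [Module R B₁]
    (iA : A₀ →ₗ[R] A₁) (πA : A₁ →ₗ[R] A₀)
    (iB : B₀ →ₗ[R] B₁) (πB : B₁ →ₗ[R] B₀)
    (hiA : Function.Injective iA) (hπA : Function.Surjective πA)
    (hA : LinearMap.range iA = LinearMap.ker πA)
    (hiB : Function.Injective iB) (hπB : Function.Surjective πB)
    (hB : LinearMap.range iB = LinearMap.ker πB)
    (f : (A₁ ⊗[R] B₁) →ₗ[R] (A₀ ⊗[R] B₁) × (A₁ ⊗[R] B₀))
    (hf : ∀ x : A₁ ⊗[R] B₁, f x =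
      (TensorProduct.map πA (LinearMap.id : B₁ →ₗ[R] B₁) x,
       TensorProduct.map (LinearMap.id : A₁ →ₗ[R] A₁) πB x))
    (U : Submodule R ((A₀ ⊗[R] B₁) × (A₁ ⊗[R] B₀)))
    (hU : ∀ y : (A₀ ⊗[R] B₁) × (A₁ ⊗[R] B₀), y ∈ U ↔
      TensorProduct.map (LinearMap.id : A₀ →ₗ[R] A₀) πB y.1
        = TensorProduct.map πA (LinearMap.id : B₀ →ₗ[R] B₀) y.2) :
    LinearMap.range f = U :=
  range_eq_fiber_product_general πA πB hπA hπB f hf U hU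
end

section
/- Let k be a field, let A = (i_A, A₁, π_A) be a self-extension of a k-vector space A₀ and B = (i_B, B₁, π_B) a self-extension of a k-vector space B₀. For the ordered pair (A, B) set F_{A,B} = {(u, v) ∈ (A₁ ⊗ B₀) × (A₀ ⊗ B₁) : (π_A ⊗ id) u = (id ⊗ π_B) v}, N_{A,B} = {((i_A ⊗ id) w, −(id ⊗ i_B) w) : w ∈ A₀ ⊗ B₀}, W_{A,B} = F_{A,B} ⧸ N_{A,B}, with structure maps Δ_{A,B}(w) = [((i_A ⊗ id) w, 0)] and p_{A,B}([(u, v)]) = (π_A ⊗ id) u, and define F_{B,A}, N_{B,A}, W_{B,A}, Δ_{B,A}, p_{B,A} analogously for the pair (B, A). Let τ denote the tensor-swap isomorphisms (e.g. A₀ ⊗ B₁ ≅ B₁ ⊗ A₀) and τ₀ : A₀ ⊗ B₀ ≅ B₀ ⊗ A₀ the swap. Then the map (u, v) ↦ (τ v, τ u) carries F_{A,B} into F_{B,A} and N_{A,B} into N_{B,A}, and the induced k-linear map Ψ : W_{A,B} → W_{B,A} is an isomorphism satisfying Ψ ∘ Δ_{A,B} = Δ_{B,A} ∘ τ₀ and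 p_{B,A} ∘ Ψ = τ₀ ∘ p_{A,B}. -/
/-!
Swapping the tensor factors, `(u, v) ↦ (τ v, τ u)`, is a linear automorphism of the ambient
spaces. Naturality of `τ` shows that it matches the fibre-product conditions defining
`F_{A,B}` and `F_{B,A}`, and it sends the relation `((i_A ⊗ id) w, -(id ⊗ i_B) w)` to the
relation attached to `-τ₀ w`, so it descends to an isomorphism of the quotients. Compatibility
with `p` is again naturality of `τ`. For `Δ`, the swap of `((i_A ⊗ id) w, 0)` is
`(0, (id ⊗ i_A)(τ₀ w))`, which differs from `((i_B ⊗ id)(τ₀ w), 0)` by the relation attached to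
`-τ₀ w`; the representatives lie in `F` because `π ∘ i = 0`.
-/

open scoped TensorProduct

section TensorSwap

open TensorProduct

variable {k A₀ A₁ B₀ B₁ : Type*} [CommRing k]
  [AddCommGroup A₀] [AddCommGroup A₁] [AddCommGroup B₀] [AddCommGroup B₁]
  [Module k A₀] [Module k A₁] [Module k B₀] [Module k B₁]

theorem Submodule.map_equiv_eq_of_forall_mem_iff {R M N : Type*} [Semiring R]
    [AddCommMonoid M] [AddCommMonoid N] [Module R M] [Module R N]
    (e : M ≃ₗ[R] N) {P : Submodule R M} {Q : Submodule R N} (h : ∀ x, e x ∈ Q ↔ x ∈ P) :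
    P.map (e : M →ₗ[R] N) = Q := by
  ext y
  rw [Submodule.mem_map_equiv, ← h, e.apply_symm_apply]

variable (k A₀ A₁ B₀ B₁) in
def prodTensorSwap : ((A₁ ⊗[k] B₀) × (A₀ ⊗[k] B₁)) ≃ₗ[k] ((B₁ ⊗[k] A₀) × (B₀ ⊗[k] A₁)) :=
  (LinearEquiv.prodComm k _ _).trans
    ((TensorProduct.comm k A₀ B₁).prodCongr (TensorProduct.comm k A₁ B₀))

@[simp]
theorem prodTensorSwap_apply (y : (A₁ ⊗[k] B₀) × (A₀ ⊗[k] B₁)) :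
    prodTensorSwap k A₀ A₁ B₀ B₁ y =
      (TensorProduct.comm k A₀ B₁ y.2, TensorProduct.comm k A₁ B₀ y.1) :=
  rfl

theorem prodTensorSwap_prodTensorSwap (y : (A₁ ⊗[k] B₀) × (A₀ ⊗[k] B₁)) :
    prodTensorSwap k B₀ B₁ A₀ A₁ (prodTensorSwap k A₀ A₁ B₀ B₁ y) = y := by
  simp

theorem prodTensorSwap_mem_pullback_iff (πA : A₁ →ₗ[k] A₀) (πB : B₁ →ₗ[k] B₀)
    (y : (A₁ ⊗[k] B₀) × (A₀ ⊗[k] B₁)) :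
    map πB LinearMap.id (prodTensorSwap k A₀ A₁ B₀ B₁ y).1
        = map LinearMap.id πA (prodTensorSwap k A₀ A₁ B₀ B₁ y).2 ↔
      map πA LinearMap.id y.1 = map LinearMap.id πB y.2 := by
  rw [prodTensorSwap_apply, map_comm, map_comm, (TensorProduct.comm k _ _).injective.eq_iff,
    eq_comm]

theorem prodTensorSwap_antidiagonal (iA : A₀ →ₗ[k] A₁) (iB : B₀ →ₗ[k] B₁) (w : A₀ ⊗[k] B₀) :
    prodTensorSwap k A₀ A₁ B₀ B₁ (map iA LinearMap.id w, -map LinearMap.id iB w) =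
      (map iB LinearMap.id (-TensorProduct.comm k A₀ B₀ w),
        -map LinearMap.id iA (-TensorProduct.comm k A₀ B₀ w)) := by
  simp [map_comm]

theorem exists_prodTensorSwap_eq_antidiagonal_iff (iA : A₀ →ₗ[k] A₁) (iB : B₀ →ₗ[k] B₁)
    (y : (A₁ ⊗[k] B₀) × (A₀ ⊗[k] B₁)) :
    (∃ w : B₀ ⊗[k] A₀, prodTensorSwap k A₀ A₁ B₀ B₁ y =
        (map iB LinearMap.id w, -map LinearMap.id iA w)) ↔
      ∃ w : A₀ ⊗[k] B₀, y = (map iA LinearMap.id w, -map LinearMap.id iB w) := by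
  constructor
  · rintro ⟨w, hw⟩
    refine ⟨-TensorProduct.comm k B₀ A₀ w, ?_⟩
    rw [← prodTensorSwap_prodTensorSwap y, hw, prodTensorSwap_antidiagonal]
  · rintro ⟨w, rfl⟩
    exact ⟨_, prodTensorSwap_antidiagonal iA iB w⟩

theorem prodTensorSwap_inl_sub_inl (iA : A₀ →ₗ[k] A₁) (iB : B₀ →ₗ[k] B₁) (w : A₀ ⊗[k] B₀) :
    prodTensorSwap k A₀ A₁ B₀ B₁ (map iA LinearMap.id w, 0) -
        (map iB LinearMap.id (TensorProduct.comm k A₀ B₀ w), 0) =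
      (map iB LinearMap.id (-TensorProduct.comm k A₀ B₀ w),
        -map LinearMap.id iA (-TensorProduct.comm k A₀ B₀ w)) := by
  simp [map_comm, sub_eq_neg_add]

theorem map_id_map_id_of_comp_eq_zero {iA : A₀ →ₗ[k] A₁} {πA : A₁ →ₗ[k] A₀}
    (h : πA ∘ₗ iA = 0) (w : A₀ ⊗[k] B₀) :
    map πA LinearMap.id (map iA (LinearMap.id : B₀ →ₗ[k] B₀) w) = 0 := by
  rw [map_map, h, map_zero_left, LinearMap.zero_apply]

end TensorSwap

theorem prolongation_commutativity_general
    {k A₀ A₁ B₀ B₁ : Type*} [Field k]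
    [AddCommGroup A₀] [AddCommGroup A₁] [AddCommGroup B₀] [AddCommGroup B₁]
    [Module k A₀] [Module k A₁] [Module k B₀] [Module k B₁]
    (iA : A₀ →ₗ[k] A₁) (πA : A₁ →ₗ[k] A₀)
    (iB : B₀ →ₗ[k] B₁) (πB : B₁ →ₗ[k] B₀)
    (hA : LinearMap.range iA = LinearMap.ker πA)
    (hB : LinearMap.range iB = LinearMap.ker πB)
    -- the data for the ordered pair (A, B)
    (FAB : Submodule k ((A₁ ⊗[k] B₀) × (A₀ ⊗[k] B₁)))
    (hFAB : ∀ y : (A₁ ⊗[k] B₀) × (A₀ ⊗[k] B₁), y ∈ FAB ↔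
      TensorProduct.map πA (LinearMap.id : B₀ →ₗ[k] B₀) y.1
        = TensorProduct.map (LinearMap.id : A₀ →ₗ[k] A₀) πB y.2)
    (NAB : Submodule k FAB)
    (hNAB : ∀ y : FAB, y ∈ NAB ↔ ∃ w : A₀ ⊗[k] B₀,
      (y : (A₁ ⊗[k] B₀) × (A₀ ⊗[k] B₁))
        = (TensorProduct.map iA (LinearMap.id : B₀ →ₗ[k] B₀) w,
           -(TensorProduct.map (LinearMap.id : A₀ →ₗ[k] A₀) iB w)))
    (ΔAB : (A₀ ⊗[k] B₀) →ₗ[k] FAB ⧸ NAB)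
    (hΔAB : ∀ (w : A₀ ⊗[k] B₀)
      (h : ((TensorProduct.map iA (LinearMap.id : B₀ →ₗ[k] B₀) w,
             (0 : A₀ ⊗[k] B₁)) : (A₁ ⊗[k] B₀) × (A₀ ⊗[k] B₁)) ∈ FAB),
      ΔAB w = NAB.mkQ ⟨(TensorProduct.map iA LinearMap.id w, 0), h⟩)
    (pAB : (FAB ⧸ NAB) →ₗ[k] (A₀ ⊗[k] B₀))
    (hpAB : ∀ y : FAB, pAB (NAB.mkQ y) =
      TensorProduct.map πA (LinearMap.id : B₀ →ₗ[k] B₀)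
        (y : (A₁ ⊗[k] B₀) × (A₀ ⊗[k] B₁)).1)
    -- the data for the ordered pair (B, A)
    (FBA : Submodule k ((B₁ ⊗[k] A₀) × (B₀ ⊗[k] A₁)))
    (hFBA : ∀ y : (B₁ ⊗[k] A₀) × (B₀ ⊗[k] A₁), y ∈ FBA ↔
      TensorProduct.map πB (LinearMap.id : A₀ →ₗ[k] A₀) y.1
        = TensorProduct.map (LinearMap.id : B₀ →ₗ[k] B₀) πA y.2)
    (NBA : Submodule k FBA)
    (hNBA : ∀ y : FBA, y ∈ NBA ↔ ∃ w : B₀ ⊗[k] A₀,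
      (y : (B₁ ⊗[k] A₀) × (B₀ ⊗[k] A₁))
        = (TensorProduct.map iB (LinearMap.id : A₀ →ₗ[k] A₀) w,
           -(TensorProduct.map (LinearMap.id : B₀ →ₗ[k] B₀) iA w)))
    (ΔBA : (B₀ ⊗[k] A₀) →ₗ[k] FBA ⧸ NBA)
    (hΔBA : ∀ (w : B₀ ⊗[k] A₀)
      (h : ((TensorProduct.map iB (LinearMap.id : A₀ →ₗ[k] A₀) w,
             (0 : B₀ ⊗[k] A₁)) : (B₁ ⊗[k] A₀) × (B₀ ⊗[k] A₁)) ∈ FBA),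
      ΔBA w = NBA.mkQ ⟨(TensorProduct.map iB LinearMap.id w, 0), h⟩)
    (pBA : (FBA ⧸ NBA) →ₗ[k] (B₀ ⊗[k] A₀))
    (hpBA : ∀ y : FBA, pBA (NBA.mkQ y) =
      TensorProduct.map πB (LinearMap.id : A₀ →ₗ[k] A₀)
        (y : (B₁ ⊗[k] A₀) × (B₀ ⊗[k] A₁)).1) :
    -- conclusion: the swap `(u, v) ↦ (τ v, τ u)` carries `F_{A,B}` to `F_{B,A}`,
    -- `N_{A,B}` to `N_{B,A}`, and induces an isomorphism `Ψ` compatible with the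
    -- structure maps via `τ₀`
    ∃ hS : ∀ y : FAB,
        ((TensorProduct.comm k A₀ B₁ (y : (A₁ ⊗[k] B₀) × (A₀ ⊗[k] B₁)).2,
          TensorProduct.comm k A₁ B₀ (y : (A₁ ⊗[k] B₀) × (A₀ ⊗[k] B₁)).1) :
          (B₁ ⊗[k] A₀) × (B₀ ⊗[k] A₁)) ∈ FBA,
      (∀ y : FAB, y ∈ NAB →
        (⟨(TensorProduct.comm k A₀ B₁ (y : (A₁ ⊗[k] B₀) × (A₀ ⊗[k] B₁)).2,
           TensorProduct.comm k A₁ B₀ (y : (A₁ ⊗[k] B₀) × (A₀ ⊗[k] B₁)).1),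
          hS y⟩ : FBA) ∈ NBA) ∧
      ∃ Ψ : (FAB ⧸ NAB) →ₗ[k] (FBA ⧸ NBA),
        (∀ y : FAB, Ψ (NAB.mkQ y) = NBA.mkQ
          ⟨(TensorProduct.comm k A₀ B₁ (y : (A₁ ⊗[k] B₀) × (A₀ ⊗[k] B₁)).2,
            TensorProduct.comm k A₁ B₀ (y : (A₁ ⊗[k] B₀) × (A₀ ⊗[k] B₁)).1),
           hS y⟩) ∧
        Function.Bijective Ψ ∧
        (∀ w : A₀ ⊗[k] B₀, Ψ (ΔAB w) = ΔBA (TensorProduct.comm k A₀ B₀ w)) ∧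
        (∀ z : FAB ⧸ NAB, pBA (Ψ z) = TensorProduct.comm k A₀ B₀ (pAB z)) := by
  have hF : ∀ y, prodTensorSwap k A₀ A₁ B₀ B₁ y ∈ FBA ↔ y ∈ FAB := fun y => by
    rw [hFBA, hFAB, prodTensorSwap_mem_pullback_iff]
  let e : FAB ≃ₗ[k] FBA := (prodTensorSwap k A₀ A₁ B₀ B₁).ofSubmodules FAB FBA
    (Submodule.map_equiv_eq_of_forall_mem_iff _ hF)
  have hN : ∀ y : FAB, e y ∈ NBA ↔ y ∈ NAB := fun y => by
    rw [hNBA, hNAB]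
    exact exists_prodTensorSwap_eq_antidiagonal_iff iA iB y
  refine ⟨fun y => (hF y).mpr y.2, fun y => (hN y).mpr,
    Submodule.Quotient.equiv NAB NBA e (Submodule.map_equiv_eq_of_forall_mem_iff e hN),
    fun y => rfl, LinearEquiv.bijective _, fun w => ?_, fun z => ?_⟩
  · have hπiA := LinearMap.range_le_ker_iff.mp hA.le
    have hπiB := LinearMap.range_le_ker_iff.mp hB.le
    rw [hΔAB w ((hFAB _).mpr (by rw [map_id_map_id_of_comp_eq_zero hπiA, map_zero])),
      hΔBA _ ((hFBA _).mpr (by rw [map_id_map_id_of_comp_eq_zero hπiB, map_zero]))]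
    exact (Submodule.Quotient.eq NBA).mpr ((hNBA _).mpr ⟨_, prodTensorSwap_inl_sub_inl iA iB w⟩)
  · obtain ⟨y, rfl⟩ := NAB.mkQ_surjective z
    change pBA (NBA.mkQ (e y)) = _
    rw [hpBA, hpAB, (hFAB y).mp y.2]
    exact TensorProduct.map_comm _ _ _

/-- **Commutativity constraint on the prolongation.**
For self-extensions `A = (iA, A₁, πA)` of `A₀` and `B = (iB, B₁, πB)` of `B₀`
over a field `k`, the tensor-swap maps carry `F_{A,B}` into `F_{B,A}` and
`N_{A,B}` into `N_{B,A}`, and induce an isomorphism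
`Ψ : W_{A,B} → W_{B,A}` with `Ψ ∘ Δ_{A,B} = Δ_{B,A} ∘ τ₀` and
`p_{B,A} ∘ Ψ = τ₀ ∘ p_{A,B}`. -/
theorem prolongation_commutativity
    {k A₀ A₁ B₀ B₁ : Type*} [Field k]
    [AddCommGroup A₀] [AddCommGroup A₁] [AddCommGroup B₀] [AddCommGroup B₁]
    [Module k A₀] [Module k A₁] [Module k B₀] [Module k B₁]
    (iA : A₀ →ₗ[k] A₁) (πA : A₁ →ₗ[k] A₀)
    (iB : B₀ →ₗ[k] B₁) (πB : B₁ →ₗ[k] B₀)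
    (hiA : Function.Injective iA) (hπA : Function.Surjective πA)
    (hA : LinearMap.range iA = LinearMap.ker πA)
    (hiB : Function.Injective iB) (hπB : Function.Surjective πB)
    (hB : LinearMap.range iB = LinearMap.ker πB)
    -- the data for the ordered pair (A, B)
    (FAB : Submodule k ((A₁ ⊗[k] B₀) × (A₀ ⊗[k] B₁)))
    (hFAB : ∀ y : (A₁ ⊗[k] B₀) × (A₀ ⊗[k] B₁), y ∈ FAB ↔
      TensorProduct.map πA (LinearMap.id : B₀ →ₗ[k] B₀) y.1
        = TensorProduct.map (LinearMap.id : A₀ →ₗ[k] A₀) πB y.2)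
    (NAB : Submodule k FAB)
    (hNAB : ∀ y : FAB, y ∈ NAB ↔ ∃ w : A₀ ⊗[k] B₀,
      (y : (A₁ ⊗[k] B₀) × (A₀ ⊗[k] B₁))
        = (TensorProduct.map iA (LinearMap.id : B₀ →ₗ[k] B₀) w,
           -(TensorProduct.map (LinearMap.id : A₀ →ₗ[k] A₀) iB w)))
    (ΔAB : (A₀ ⊗[k] B₀) →ₗ[k] FAB ⧸ NAB)
    (hΔAB : ∀ (w : A₀ ⊗[k] B₀)
      (h : ((TensorProduct.map iA (LinearMap.id : B₀ →ₗ[k] B₀) w,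
             (0 : A₀ ⊗[k] B₁)) : (A₁ ⊗[k] B₀) × (A₀ ⊗[k] B₁)) ∈ FAB),
      ΔAB w = NAB.mkQ ⟨(TensorProduct.map iA LinearMap.id w, 0), h⟩)
    (pAB : (FAB ⧸ NAB) →ₗ[k] (A₀ ⊗[k] B₀))
    (hpAB : ∀ y : FAB, pAB (NAB.mkQ y) =
      TensorProduct.map πA (LinearMap.id : B₀ →ₗ[k] B₀)
        (y : (A₁ ⊗[k] B₀) × (A₀ ⊗[k] B₁)).1)
    -- the data for the ordered pair (B, A)
    (FBA : Submodule k ((B₁ ⊗[k] A₀) × (B₀ ⊗[k] A₁)))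
    (hFBA : ∀ y : (B₁ ⊗[k] A₀) × (B₀ ⊗[k] A₁), y ∈ FBA ↔
      TensorProduct.map πB (LinearMap.id : A₀ →ₗ[k] A₀) y.1
        = TensorProduct.map (LinearMap.id : B₀ →ₗ[k] B₀) πA y.2)
    (NBA : Submodule k FBA)
    (hNBA : ∀ y : FBA, y ∈ NBA ↔ ∃ w : B₀ ⊗[k] A₀,
      (y : (B₁ ⊗[k] A₀) × (B₀ ⊗[k] A₁))
        = (TensorProduct.map iB (LinearMap.id : A₀ →ₗ[k] A₀) w,
           -(TensorProduct.map (LinearMap.id : B₀ →ₗ[k] B₀) iA w)))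
    (ΔBA : (B₀ ⊗[k] A₀) →ₗ[k] FBA ⧸ NBA)
    (hΔBA : ∀ (w : B₀ ⊗[k] A₀)
      (h : ((TensorProduct.map iB (LinearMap.id : A₀ →ₗ[k] A₀) w,
             (0 : B₀ ⊗[k] A₁)) : (B₁ ⊗[k] A₀) × (B₀ ⊗[k] A₁)) ∈ FBA),
      ΔBA w = NBA.mkQ ⟨(TensorProduct.map iB LinearMap.id w, 0), h⟩)
    (pBA : (FBA ⧸ NBA) →ₗ[k] (B₀ ⊗[k] A₀))
    (hpBA : ∀ y : FBA, pBA (NBA.mkQ y) =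
      TensorProduct.map πB (LinearMap.id : A₀ →ₗ[k] A₀)
        (y : (B₁ ⊗[k] A₀) × (B₀ ⊗[k] A₁)).1) :
    -- conclusion: the swap `(u, v) ↦ (τ v, τ u)` carries `F_{A,B}` to `F_{B,A}`,
    -- `N_{A,B}` to `N_{B,A}`, and induces an isomorphism `Ψ` compatible with the
    -- structure maps via `τ₀`
    ∃ hS : ∀ y : FAB,
        ((TensorProduct.comm k A₀ B₁ (y : (A₁ ⊗[k] B₀) × (A₀ ⊗[k] B₁)).2,
          TensorProduct.comm k A₁ B₀ (y : (A₁ ⊗[k] B₀) × (A₀ ⊗[k] B₁)).1) :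
          (B₁ ⊗[k] A₀) × (B₀ ⊗[k] A₁)) ∈ FBA,
      (∀ y : FAB, y ∈ NAB →
        (⟨(TensorProduct.comm k A₀ B₁ (y : (A₁ ⊗[k] B₀) × (A₀ ⊗[k] B₁)).2,
           TensorProduct.comm k A₁ B₀ (y : (A₁ ⊗[k] B₀) × (A₀ ⊗[k] B₁)).1),
          hS y⟩ : FBA) ∈ NBA) ∧
      ∃ Ψ : (FAB ⧸ NAB) →ₗ[k] (FBA ⧸ NBA),
        (∀ y : FAB, Ψ (NAB.mkQ y) = NBA.mkQ
          ⟨(TensorProduct.comm k A₀ B₁ (y : (A₁ ⊗[k] B₀) × (A₀ ⊗[k] B₁)).2,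
            TensorProduct.comm k A₁ B₀ (y : (A₁ ⊗[k] B₀) × (A₀ ⊗[k] B₁)).1),
           hS y⟩) ∧
        Function.Bijective Ψ ∧
        (∀ w : A₀ ⊗[k] B₀, Ψ (ΔAB w) = ΔBA (TensorProduct.comm k A₀ B₀ w)) ∧
        (∀ z : FAB ⧸ NAB, pBA (Ψ z) = TensorProduct.comm k A₀ B₀ (pAB z)) :=
  prolongation_commutativity_general iA πA iB πB hA hB FAB hFAB NAB hNAB ΔAB hΔAB pAB hpAB FBA hFBA
    NBA hNBA ΔBA hΔBA pBA hpBA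
end

section
/- Let k be a field, and let A = (i_A, A₁, π_A), B = (i_B, B₁, π_B), C = (i_C, C₁, π_C) be self-extensions of k-vector spaces A₀, B₀, C₀ respectively. Set F₃ = {(u, v, w) ∈ (A₁ ⊗ B₀ ⊗ C₀) × (A₀ ⊗ B₁ ⊗ C₀) × (A₀ ⊗ B₀ ⊗ C₁) : (π_A ⊗ id ⊗ id) u = (id ⊗ π_B ⊗ id) v and (id ⊗ π_B ⊗ id) v = (id ⊗ id ⊗ π_C) w}, and let N₃ be the submodule of F₃ spanned by the elements ((i_A ⊗ id ⊗ id) s, −(id ⊗ i_B ⊗ id) s, 0) and (0, (id ⊗ i_B ⊗ id) t, −(id ⊗ id ⊗ i_C) t) for s, t ∈ A₀ ⊗ B₀ ⊗ C₀. Let W₃ = F₃ ⧸ N₃. Then the map Δ₃ : A₀ ⊗ B₀ ⊗ C₀ → W₃, s ↦ [((i_A ⊗ id ⊗ id) s, 0, 0)], is injective; there is a unique k-linear p₃ : W₃ → A₀ ⊗ B₀ ⊗ C₀ with p₃([(u, v, w)]) = (π_A ⊗ id ⊗ id) u; p₃ is surjective; and range Δ₃ = ker p₃. In other words, (Δ₃,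 W₃, p₃) is a self-extension of A₀ ⊗ B₀ ⊗ C₀. -/
/-!
Over a field, tensoring is exact, so `A ⊗ B₀ ⊗ C₀`, `A₀ ⊗ B ⊗ C₀` and `A₀ ⊗ B₀ ⊗ C` give three
short exact sequences `0 → K → Xⱼ → S → 0` with common ends `K = S = A₀ ⊗ B₀ ⊗ C₀`, and the
claim holds for any three such sequences. If `(x₁, x₂, x₃)` lies in the fibre product and
`π₁ x₁ = 0`, then `xⱼ = iⱼ aⱼ`, and modulo the relations `(x₁, x₂, x₃)` equals
`(i₁ (a₁ + a₂ + a₃), 0, 0)`: this is exactness in the middle. Conversely `(i₁ s, 0, 0)` is a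
relation only when `s = 0`, because `i₂` and `i₃` are injective.
-/

open scoped TensorProduct

open LinearMap Submodule

structure IsShortExact {R M N P : Type*} [Ring R] [AddCommGroup M] [AddCommGroup N]
    [AddCommGroup P] [Module R M] [Module R N] [Module R P]
    (i : M →ₗ[R] N) (π : N →ₗ[R] P) : Prop where
  injective : Function.Injective i
  exact : Function.Exact i π
  surjective : Function.Surjective π

namespace IsShortExact

variable {R M N P : Type*} [CommRing R] [AddCommGroup M] [AddCommGroup N] [AddCommGroup P]
  [Module R M] [Module R N] [Module R P] {i : M →ₗ[R] N} {π : N →ₗ[R] P}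

theorem of_range_eq_ker (hi : Function.Injective i) (hπ : Function.Surjective π)
    (h : range i = ker π) : IsShortExact i π :=
  ⟨hi, LinearMap.exact_iff.2 h.symm, hπ⟩

theorem rTensor (h : IsShortExact i π) (Q : Type*) [AddCommGroup Q] [Module R Q]
    [Module.Flat R Q] : IsShortExact (i.rTensor Q) (π.rTensor Q) :=
  ⟨Module.Flat.rTensor_preserves_injective_linearMap i h.injective,
    Module.Flat.rTensor_exact Q h.exact, π.rTensor_surjective Q h.surjective⟩

theorem lTensor (h : IsShortExact i π) (Q : Type*) [AddCommGroup Q] [Module R Q]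
    [Module.Flat R Q] : IsShortExact (i.lTensor Q) (π.lTensor Q) :=
  ⟨Module.Flat.lTensor_preserves_injective_linearMap i h.injective,
    Module.Flat.lTensor_exact Q h.exact, π.lTensor_surjective Q h.surjective⟩

end IsShortExact

theorem LinearMap.exists_comp_eq_of_surjective_of_ker_le {R M W P : Type*} [Ring R]
    [AddCommGroup M] [AddCommGroup W] [AddCommGroup P] [Module R M] [Module R W] [Module R P]
    {q : M →ₗ[R] W} (hq : Function.Surjective q) {f : M →ₗ[R] P} (hker : ker q ≤ ker f) :
    ∃ g : W →ₗ[R] P, g ∘ₗ q = f :=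
  ⟨(ker q).liftQ f hker ∘ₗ (q.quotKerEquivOfSurjective hq).symm.toLinearMap, LinearMap.ext
    fun y => by simp [quotKerEquivOfSurjective_symm_apply]⟩

section FiberProduct

variable {R K S X₁ X₂ X₃ : Type*} [Ring R] [AddCommGroup K] [AddCommGroup S]
  [AddCommGroup X₁] [AddCommGroup X₂] [AddCommGroup X₃] [Module R K] [Module R S]
  [Module R X₁] [Module R X₂] [Module R X₃]

def fiberProduct₃ (π₁ : X₁ →ₗ[R] S) (π₂ : X₂ →ₗ[R] S) (π₃ : X₃ →ₗ[R] S) :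
    Submodule R (X₁ × X₂ × X₃) :=
  eqLocus (π₁ ∘ₗ fst R _ _) (π₂ ∘ₗ fst R _ _ ∘ₗ snd R _ _) ⊓
    eqLocus (π₂ ∘ₗ fst R _ _ ∘ₗ snd R _ _) (π₃ ∘ₗ snd R _ _ ∘ₗ snd R _ _)

theorem mem_fiberProduct₃ {π₁ : X₁ →ₗ[R] S} {π₂ : X₂ →ₗ[R] S} {π₃ : X₃ →ₗ[R] S}
    {y : X₁ × X₂ × X₃} :
    y ∈ fiberProduct₃ π₁ π₂ π₃ ↔ π₁ y.1 = π₂ y.2.1 ∧ π₂ y.2.1 = π₃ y.2.2 :=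
  Iff.rfl

def relations₃ (i₁ : K →ₗ[R] X₁) (i₂ : K →ₗ[R] X₂) (i₃ : K →ₗ[R] X₃) :
    Submodule R (X₁ × X₂ × X₃) :=
  range (i₁.prod ((-i₂).prod 0)) ⊔ range ((0 : K →ₗ[R] X₁).prod (i₂.prod (-i₃)))

theorem mem_relations₃ {i₁ : K →ₗ[R] X₁} {i₂ : K →ₗ[R] X₂} {i₃ : K →ₗ[R] X₃}
    {x : X₁ × X₂ × X₃} :
    x ∈ relations₃ i₁ i₂ i₃ ↔ ∃ a b, (i₁ a, -i₂ a + i₂ b, -i₃ b) = x := by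
  simp only [relations₃, mem_sup, mem_range]
  constructor
  · rintro ⟨_, ⟨a, rfl⟩, _, ⟨b, rfl⟩, rfl⟩
    exact ⟨a, b, by simp⟩
  · rintro ⟨a, b, rfl⟩
    exact ⟨_, ⟨a, rfl⟩, _, ⟨b, rfl⟩, by simp⟩

theorem span_eq_relations₃ (i₁ : K →ₗ[R] X₁) (i₂ : K →ₗ[R] X₂) (i₃ : K →ₗ[R] X₃) :
    span R ({x | ∃ s, x = (i₁ s, -i₂ s, 0)} ∪ {x | ∃ t, x = (0, i₂ t, -i₃ t)}) =
      relations₃ i₁ i₂ i₃ := by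
  refine le_antisymm (span_le.2 ?_) (sup_le ?_ ?_)
  · rintro _ (⟨s, rfl⟩ | ⟨t, rfl⟩)
    · exact mem_relations₃.2 ⟨s, 0, by simp⟩
    · exact mem_relations₃.2 ⟨0, t, by simp⟩
  · rintro _ ⟨s, rfl⟩
    exact subset_span (Or.inl ⟨s, rfl⟩)
  · rintro _ ⟨t, rfl⟩
    exact subset_span (Or.inr ⟨t, rfl⟩)

variable {i₁ : K →ₗ[R] X₁} {i₂ : K →ₗ[R] X₂} {i₃ : K →ₗ[R] X₃}
  {π₁ : X₁ →ₗ[R] S} {π₂ : X₂ →ₗ[R] S} {π₃ : X₃ →ₗ[R] S}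

theorem relations₃_le_fiberProduct₃ (h₁ : Function.Exact i₁ π₁) (h₂ : Function.Exact i₂ π₂)
    (h₃ : Function.Exact i₃ π₃) : relations₃ i₁ i₂ i₃ ≤ fiberProduct₃ π₁ π₂ π₃ := by
  intro x hx
  obtain ⟨a, b, rfl⟩ := mem_relations₃.1 hx
  simp [mem_fiberProduct₃, h₁.apply_apply_eq_zero, h₂.apply_apply_eq_zero,
    h₃.apply_apply_eq_zero]

theorem fst_mem_ker_of_mem_relations₃ (h₁ : Function.Exact i₁ π₁) {x : X₁ × X₂ × X₃}
    (hx : x ∈ relations₃ i₁ i₂ i₃) : π₁ x.1 = 0 := by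
  obtain ⟨a, b, rfl⟩ := mem_relations₃.1 hx
  exact h₁.apply_apply_eq_zero a

theorem eq_zero_of_mem_relations₃ (hi₁ : Function.Injective i₁) (hi₂ : Function.Injective i₂)
    (hi₃ : Function.Injective i₃) {s : K} (hs : (i₁ s, 0, 0) ∈ relations₃ i₁ i₂ i₃) :
    s = 0 := by
  obtain ⟨a, b, h⟩ := mem_relations₃.1 hs
  simp only [Prod.mk.injEq, neg_add_eq_zero, neg_eq_zero] at h
  obtain ⟨hs, hab, hb⟩ := h
  rw [← hi₁ hs, hi₂ hab, (injective_iff_map_eq_zero i₃).1 hi₃ b hb]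

theorem exists_mem_fiberProduct₃_fst_eq (hπ₁ : Function.Surjective π₁)
    (hπ₂ : Function.Surjective π₂) (hπ₃ : Function.Surjective π₃) (x : S) :
    ∃ y ∈ fiberProduct₃ π₁ π₂ π₃, π₁ y.1 = x := by
  obtain ⟨u, hu⟩ := hπ₁ x
  obtain ⟨v, hv⟩ := hπ₂ x
  obtain ⟨w, hw⟩ := hπ₃ x
  exact ⟨(u, v, w), mem_fiberProduct₃.2 ⟨hu.trans hv.symm, hv.trans hw.symm⟩, hu⟩

theorem exists_sub_mem_relations₃ (h₁ : Function.Exact i₁ π₁) (h₂ : Function.Exact i₂ π₂)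
    (h₃ : Function.Exact i₃ π₃) {y : X₁ × X₂ × X₃} (hy : y ∈ fiberProduct₃ π₁ π₂ π₃)
    (hy₀ : π₁ y.1 = 0) : ∃ s, y - (i₁ s, 0, 0) ∈ relations₃ i₁ i₂ i₃ := by
  obtain ⟨hy₁₂, hy₂₃⟩ := mem_fiberProduct₃.1 hy
  obtain ⟨a, ha⟩ := (h₁ y.1).1 hy₀
  obtain ⟨b, hb⟩ := (h₂ y.2.1).1 (hy₁₂ ▸ hy₀)
  obtain ⟨c, hc⟩ := (h₃ y.2.2).1 (hy₂₃ ▸ hy₁₂ ▸ hy₀)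
  refine ⟨a + b + c, mem_relations₃.2 ⟨-b - c, -c, ?_⟩⟩
  ext <;> simp [← ha, ← hb, ← hc]
  abel

theorem span_eq_comap_relations₃ (h₁ : Function.Exact i₁ π₁) (h₂ : Function.Exact i₂ π₂)
    (h₃ : Function.Exact i₃ π₃) :
    span R ({y : fiberProduct₃ π₁ π₂ π₃ |
        ∃ s, (y : X₁ × X₂ × X₃) = (i₁ s, -i₂ s, 0)} ∪
      {y : fiberProduct₃ π₁ π₂ π₃ | ∃ t, (y : X₁ × X₂ × X₃) = (0, i₂ t, -i₃ t)}) =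
      (relations₃ i₁ i₂ i₃).comap (fiberProduct₃ π₁ π₂ π₃).subtype := by
  rw [← span_eq_relations₃]
  refine span_preimage_eq (f := (fiberProduct₃ π₁ π₂ π₃).subtype)
    (s := {x | ∃ s, x = (i₁ s, -i₂ s, 0)} ∪ {x | ∃ t, x = (0, i₂ t, -i₃ t)})
    ⟨_, Or.inl ⟨0, rfl⟩⟩ ?_
  rw [range_subtype]
  exact subset_span.trans ((span_eq_relations₃ i₁ i₂ i₃).trans_le
    (relations₃_le_fiberProduct₃ h₁ h₂ h₃))

theorem exists_extension_of_fiberProduct₃_quotient (h₁ : IsShortExact i₁ π₁)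
    (h₂ : IsShortExact i₂ π₂) (h₃ : IsShortExact i₃ π₃)
    (F : Submodule R (X₁ × X₂ × X₃)) (hF : F = fiberProduct₃ π₁ π₂ π₃) (N : Submodule R F)
    (hN : N = span R ({y : F | ∃ s, (y : X₁ × X₂ × X₃) = (i₁ s, -i₂ s, 0)} ∪
      {y : F | ∃ t, (y : X₁ × X₂ × X₃) = (0, i₂ t, -i₃ t)}))
    (W : Type*) [AddCommGroup W] [Module R W] (q : F →ₗ[R] W) (hq : Function.Surjective q)
    (hkerq : ker q = N) :
    ∃ (hmem : ∀ s, ((i₁ s, 0, 0) : X₁ × X₂ × X₃) ∈ F) (Δ : K →ₗ[R] W),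
      (∀ s, Δ s = q ⟨(i₁ s, 0, 0), hmem s⟩) ∧ Function.Injective Δ ∧
      ∃ p : W →ₗ[R] S, (∀ y : F, p (q y) = π₁ (y : X₁ × X₂ × X₃).1) ∧
        (∀ p' : W →ₗ[R] S, (∀ y : F, p' (q y) = π₁ (y : X₁ × X₂ × X₃).1) → p' = p) ∧
        Function.Surjective p ∧ range Δ = ker p := by
  subst hF hkerq
  have hker : ∀ y, q y = 0 ↔ (y : X₁ × X₂ × X₃) ∈ relations₃ i₁ i₂ i₃ := fun y => by
    rw [← mem_ker, hN, span_eq_comap_relations₃ h₁.exact h₂.exact h₃.exact, mem_comap]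
    rfl
  have hmem : ∀ s, ((i₁ s, 0, 0) : X₁ × X₂ × X₃) ∈ fiberProduct₃ π₁ π₂ π₃ := fun s =>
    mem_fiberProduct₃.2 ⟨by simp [h₁.exact.apply_apply_eq_zero], by simp⟩
  let j : K →ₗ[R] fiberProduct₃ π₁ π₂ π₃ := codRestrict _ (i₁.prod 0) hmem
  obtain ⟨p, hpq⟩ := exists_comp_eq_of_surjective_of_ker_le hq
    (f := π₁ ∘ₗ fst R _ _ ∘ₗ (fiberProduct₃ π₁ π₂ π₃).subtype)
    fun y hy => fst_mem_ker_of_mem_relations₃ h₁.exact ((hker y).1 hy)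
  have hp : ∀ y, p (q y) = π₁ (y : X₁ × X₂ × X₃).1 := LinearMap.congr_fun hpq
  refine ⟨hmem, q ∘ₗ j, fun s => rfl, ?_, p, hp, ?_, ?_, ?_⟩
  · refine (injective_iff_map_eq_zero _).2 fun s hs => ?_
    exact eq_zero_of_mem_relations₃ h₁.injective h₂.injective h₃.injective ((hker _).1 hs)
  · exact fun p' hp' => (cancel_right hq).1 (LinearMap.ext fun y => (hp' y).trans (hp y).symm)
  · intro x
    obtain ⟨y, hy, rfl⟩ :=
      exists_mem_fiberProduct₃_fst_eq h₁.surjective h₂.surjective h₃.surjective x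
    exact ⟨q ⟨y, hy⟩, hp _⟩
  · ext w
    obtain ⟨y, rfl⟩ := hq w
    constructor
    · rintro ⟨s, hs⟩
      rw [mem_ker, ← hs]
      exact (hp _).trans (h₁.exact.apply_apply_eq_zero s)
    · intro hy
      obtain ⟨s, hs⟩ :=
        exists_sub_mem_relations₃ h₁.exact h₂.exact h₃.exact y.2 ((hp y).symm.trans hy)
      have hqs : q (y - j s) = 0 := (hker (y - j s)).2 hs
      exact ⟨s, (sub_eq_zero.1 ((map_sub q y (j s)).symm.trans hqs)).symm⟩

end FiberProduct

/-- **The triple Yoneda object is a self-extension of `A₀ ⊗ B₀ ⊗ C₀`.**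
For self-extensions `A`, `B`, `C` of `A₀`, `B₀`, `C₀` over a field `k`, the
triple fiber-product quotient `W₃ = F₃ ⧸ N₃` (which realises both
`(A ⊗ B) ⊗ C` and `A ⊗ (B ⊗ C)`) is a self-extension of `A₀ ⊗ B₀ ⊗ C₀` with
the structure maps `Δ₃` and `p₃`.  (The quotient `W₃ = F₃ ⧸ N₃` is presented
by a surjective linear map `q : F₃ → W₃` with kernel `N₃`.) -/
theorem triple_yoneda_is_self_extension
    {k A₀ A₁ B₀ B₁ C₀ C₁ : Type*} [Field k]
    [AddCommGroup A₀] [AddCommGroup A₁] [AddCommGroup B₀] [AddCommGroup B₁]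
    [AddCommGroup C₀] [AddCommGroup C₁]
    [Module k A₀] [Module k A₁] [Module k B₀] [Module k B₁]
    [Module k C₀] [Module k C₁]
    (iA : A₀ →ₗ[k] A₁) (πA : A₁ →ₗ[k] A₀)
    (iB : B₀ →ₗ[k] B₁) (πB : B₁ →ₗ[k] B₀)
    (iC : C₀ →ₗ[k] C₁) (πC : C₁ →ₗ[k] C₀)
    (hiA : Function.Injective iA) (hπA : Function.Surjective πA)
    (hA : LinearMap.range iA = LinearMap.ker πA)
    (hiB : Function.Injective iB) (hπB : Function.Surjective πB)
    (hB : LinearMap.range iB = LinearMap.ker πB)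
    (hiC : Function.Injective iC) (hπC : Function.Surjective πC)
    (hC : LinearMap.range iC = LinearMap.ker πC)
    (F₃ : Submodule k (((A₁ ⊗[k] B₀) ⊗[k] C₀) × ((A₀ ⊗[k] B₁) ⊗[k] C₀) ×
      ((A₀ ⊗[k] B₀) ⊗[k] C₁)))
    (hF₃ : ∀ y : ((A₁ ⊗[k] B₀) ⊗[k] C₀) × ((A₀ ⊗[k] B₁) ⊗[k] C₀) ×
        ((A₀ ⊗[k] B₀) ⊗[k] C₁), y ∈ F₃ ↔
      TensorProduct.map (TensorProduct.map πA (LinearMap.id : B₀ →ₗ[k] B₀))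
          (LinearMap.id : C₀ →ₗ[k] C₀) y.1
        = TensorProduct.map (TensorProduct.map (LinearMap.id : A₀ →ₗ[k] A₀) πB)
          (LinearMap.id : C₀ →ₗ[k] C₀) y.2.1 ∧
      TensorProduct.map (TensorProduct.map (LinearMap.id : A₀ →ₗ[k] A₀) πB)
          (LinearMap.id : C₀ →ₗ[k] C₀) y.2.1
        = TensorProduct.map (LinearMap.id : (A₀ ⊗[k] B₀) →ₗ[k] (A₀ ⊗[k] B₀)) πC
          y.2.2)
    -- `N₃` is the submodule of `F₃` spanned by the elements
    -- `((iA ⊗ id ⊗ id) s, -(id ⊗ iB ⊗ id) s, 0)` and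
    -- `(0, (id ⊗ iB ⊗ id) t, -(id ⊗ id ⊗ iC) t)`
    (N₃ : Submodule k F₃)
    (hN₃ : N₃ = Submodule.span k
      ({y : F₃ | ∃ s : (A₀ ⊗[k] B₀) ⊗[k] C₀,
          (y : ((A₁ ⊗[k] B₀) ⊗[k] C₀) × ((A₀ ⊗[k] B₁) ⊗[k] C₀) ×
            ((A₀ ⊗[k] B₀) ⊗[k] C₁))
          = (TensorProduct.map (TensorProduct.map iA LinearMap.id)
              (LinearMap.id : C₀ →ₗ[k] C₀) s,
             (-(TensorProduct.map (TensorProduct.map LinearMap.id iB)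
              (LinearMap.id : C₀ →ₗ[k] C₀) s), 0))} ∪
       {y : F₃ | ∃ t : (A₀ ⊗[k] B₀) ⊗[k] C₀,
          (y : ((A₁ ⊗[k] B₀) ⊗[k] C₀) × ((A₀ ⊗[k] B₁) ⊗[k] C₀) ×
            ((A₀ ⊗[k] B₀) ⊗[k] C₁))
          = (0, (TensorProduct.map (TensorProduct.map LinearMap.id iB)
              (LinearMap.id : C₀ →ₗ[k] C₀) t,
             -(TensorProduct.map
              (LinearMap.id : (A₀ ⊗[k] B₀) →ₗ[k] (A₀ ⊗[k] B₀)) iC t)))}))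
    -- `W₃ = F₃ ⧸ N₃`, presented by the quotient map `q` with kernel `N₃`
    (W₃ : Type*) [AddCommGroup W₃] [Module k W₃]
    (q : F₃ →ₗ[k] W₃) (hq : Function.Surjective q)
    (hkerq : LinearMap.ker q = N₃) :
    ∃ (hmem : ∀ s : (A₀ ⊗[k] B₀) ⊗[k] C₀,
        ((TensorProduct.map (TensorProduct.map iA LinearMap.id)
            (LinearMap.id : C₀ →ₗ[k] C₀) s,
          ((0 : (A₀ ⊗[k] B₁) ⊗[k] C₀), (0 : (A₀ ⊗[k] B₀) ⊗[k] C₁))) :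
          ((A₁ ⊗[k] B₀) ⊗[k] C₀) × ((A₀ ⊗[k] B₁) ⊗[k] C₀) ×
            ((A₀ ⊗[k] B₀) ⊗[k] C₁)) ∈ F₃)
      (Δ₃ : ((A₀ ⊗[k] B₀) ⊗[k] C₀) →ₗ[k] W₃),
      -- `Δ₃ s = [((iA ⊗ id ⊗ id) s, 0, 0)]` and `Δ₃` is injective
      (∀ s : (A₀ ⊗[k] B₀) ⊗[k] C₀, Δ₃ s = q
        ⟨(TensorProduct.map (TensorProduct.map iA LinearMap.id)
            (LinearMap.id : C₀ →ₗ[k] C₀) s, (0, 0)), hmem s⟩) ∧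
      Function.Injective Δ₃ ∧
      ∃ p₃ : W₃ →ₗ[k] ((A₀ ⊗[k] B₀) ⊗[k] C₀),
        -- `p₃` is the unique linear map with `p₃ [(u,v,w)] = (πA ⊗ id ⊗ id) u`
        (∀ y : F₃, p₃ (q y) =
          TensorProduct.map (TensorProduct.map πA LinearMap.id)
            (LinearMap.id : C₀ →ₗ[k] C₀)
            (y : ((A₁ ⊗[k] B₀) ⊗[k] C₀) × ((A₀ ⊗[k] B₁) ⊗[k] C₀) ×
              ((A₀ ⊗[k] B₀) ⊗[k] C₁)).1) ∧
        (∀ p' : W₃ →ₗ[k] ((A₀ ⊗[k] B₀) ⊗[k] C₀),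
          (∀ y : F₃, p' (q y) =
            TensorProduct.map (TensorProduct.map πA LinearMap.id)
              (LinearMap.id : C₀ →ₗ[k] C₀)
              (y : ((A₁ ⊗[k] B₀) ⊗[k] C₀) × ((A₀ ⊗[k] B₁) ⊗[k] C₀) ×
                ((A₀ ⊗[k] B₀) ⊗[k] C₁)).1) → p' = p₃) ∧
        -- `p₃` is surjective and `range Δ₃ = ker p₃`
        Function.Surjective p₃ ∧
        LinearMap.range Δ₃ = LinearMap.ker p₃ := by
  have hA' := IsShortExact.of_range_eq_ker hiA hπA hA
  have hB' := IsShortExact.of_range_eq_ker hiB hπB hB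
  have hC' := IsShortExact.of_range_eq_ker hiC hπC hC
  exact exists_extension_of_fiberProduct₃_quotient ((hA'.rTensor B₀).rTensor C₀)
    ((hB'.lTensor A₀).rTensor C₀) (hC'.lTensor (A₀ ⊗[k] B₀)) F₃ (SetLike.ext hF₃) N₃ hN₃
    W₃ q hq hkerq
end

section
/- Let k be a commutative ring, δ : k → k a derivation, and V a k-module. On the product additive group V × V define the scalar multiplication a • (x, y) := (a·x − δ(a)·y, a·y). Then: (1) this makes V × V into a k-module, denoted DV; (2) the map ι : V → DV, v ↦ (v, 0), is k-linear, and the map d : V → DV, v ↦ (0, v), is additive and satisfies d(a·v) = δ(a) • ι(v) + a • d(v) for all a ∈ k, v ∈ V; (3) for every k-module W, every k-linear map i : V → W, and every additive map D : V → W satisfying D(a·v) = δ(a)·i(v) + a·D(v) for all a ∈ k and v ∈ V, there exists a unique k-linear map φ : DV → W such that φ ∘ ι = i and φ ∘ d = D. -/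
/-!
`DV` is `𝔻 ⊗ V` with `k` acting through `∂ · a = δ a + a ∂`; the module axioms for this action
are the additivity and the Leibniz rule of `δ`. Every `(x, y)` is `ι x + d y`, which forces the
factorisation `(x, y) ↦ i x + D y`, and this map is `k`-linear exactly because `D` is a
derivation relative to `i`.
-/

/-- The scalar multiplication `a • (x, y) = (a • x - δ a • y, a • y)` of the
module `DV = 𝔻 ⊗̂ V` associated with a derivation `δ` on `k`. -/
def dsmul {k V : Type*} [CommRing k] [AddCommGroup V] [Module k V]
    (δ : k → k) (a : k) (p : V × V) : V × V :=
  (a • p.1 - δ a • p.2, a • p.2)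

section Leibniz

variable {R : Type*} [NonAssocRing R] {δ : R → R}

theorem map_one_eq_zero_of_leibniz (hδmul : ∀ a b : R, δ (a * b) = a * δ b + b * δ a) :
    δ 1 = 0 := by
  simpa using hδmul 1 1

theorem map_zero_eq_zero_of_leibniz (hδmul : ∀ a b : R, δ (a * b) = a * δ b + b * δ a) :
    δ 0 = 0 := by
  simpa using hδmul 0 0

end Leibniz

section DSMul

variable {k V : Type*} [CommRing k] [AddCommGroup V] [Module k V] {δ : k → k}

theorem dsmul_one (hδmul : ∀ a b : k, δ (a * b) = a * δ b + b * δ a) (p : V × V) :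
    dsmul δ 1 p = p := by
  simp [dsmul, map_one_eq_zero_of_leibniz hδmul]

theorem dsmul_mul (hδmul : ∀ a b : k, δ (a * b) = a * δ b + b * δ a) (a b : k) (p : V × V) :
    dsmul δ (a * b) p = dsmul δ a (dsmul δ b p) := by
  simp only [dsmul, hδmul, Prod.ext_iff]
  constructor <;> module

theorem dsmul_add (a : k) (p q : V × V) :
    dsmul δ a (p + q) = dsmul δ a p + dsmul δ a q := by
  simp only [dsmul, Prod.fst_add, Prod.snd_add, smul_add, Prod.mk_add_mk, Prod.mk.injEq, and_true]
  abel

theorem add_dsmul (hδadd : ∀ a b : k, δ (a + b) = δ a + δ b) (a b : k) (p : V × V) :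
    dsmul δ (a + b) p = dsmul δ a p + dsmul δ b p := by
  simp only [dsmul, hδadd, Prod.mk_add_mk, Prod.ext_iff]
  constructor <;> module

theorem zero_dsmul (hδmul : ∀ a b : k, δ (a * b) = a * δ b + b * δ a) (p : V × V) :
    dsmul δ 0 p = 0 := by
  simp [dsmul, map_zero_eq_zero_of_leibniz hδmul]

theorem dsmul_zero (a : k) : dsmul δ a (0 : V × V) = 0 := by
  simp [dsmul]

theorem dsmul_inl (a : k) (v : V) : dsmul δ a (v, 0) = (a • v, 0) := by
  simp [dsmul]

theorem dsmul_inr (a : k) (v : V) : dsmul δ a (0, v) = (-(δ a • v), a • v) := by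
  simp [dsmul]

theorem inr_smul_eq_dsmul_inl_add_dsmul_inr (a : k) (v : V) :
    ((0, a • v) : V × V) = dsmul δ (δ a) (v, 0) + dsmul δ a (0, v) := by
  simp [dsmul_inl, dsmul_inr]

end DSMul

section Lift

variable {k V W : Type*} [CommRing k] [AddCommGroup V] [Module k V]
  [AddCommGroup W] [Module k W] {δ : k → k}

def dsmulLift (i : V →ₗ[k] W) (D : V →+ W) (p : V × V) : W :=
  i p.1 + D p.2

theorem dsmulLift_add (i : V →ₗ[k] W) (D : V →+ W) (p q : V × V) :
    dsmulLift i D (p + q) = dsmulLift i D p + dsmulLift i D q := by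
  simp only [dsmulLift, Prod.fst_add, Prod.snd_add, map_add]
  abel

theorem dsmulLift_dsmul (i : V →ₗ[k] W) (D : V →+ W)
    (hD : ∀ (a : k) (v : V), D (a • v) = δ a • i v + a • D v) (a : k) (p : V × V) :
    dsmulLift i D (dsmul δ a p) = a • dsmulLift i D p := by
  simp only [dsmulLift, dsmul, map_sub, map_smul, hD]
  module

theorem dsmulLift_inl (i : V →ₗ[k] W) (D : V →+ W) (v : V) : dsmulLift i D (v, 0) = i v := by
  simp [dsmulLift]

theorem dsmulLift_inr (i : V →ₗ[k] W) (D : V →+ W) (v : V) : dsmulLift i D (0, v) = D v := by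
  simp [dsmulLift]

theorem map_eq_map_inl_add_map_inr {φ : V × V → W}
    (hadd : ∀ p q : V × V, φ (p + q) = φ p + φ q) (p : V × V) :
    φ p = φ (p.1, 0) + φ (0, p.2) := by
  rw [← hadd]
  simp

end Lift

/-- **The universal derivation `𝔻 ⊗̂ V`.**
Let `δ` be a derivation on a commutative ring `k` and `V` a `k`-module.
(1) `dsmul δ` makes the additive group `V × V` into a `k`-module `DV`;
(2) `ι v = (v, 0)` is `k`-linear and `d v = (0, v)` is additive and satisfies
`d (a • v) = δ a • ι v + a • d v`;
(3) the pair `(ι, d)` is universal: every pair `(i, D)` with `i` linear and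
`D` a derivation relative to `i` factors uniquely through a linear map `φ` on
`DV`. -/
theorem universal_derivation_module
    {k V : Type*} [CommRing k] [AddCommGroup V] [Module k V]
    (δ : k → k)
    (hδadd : ∀ a b : k, δ (a + b) = δ a + δ b)
    (hδmul : ∀ a b : k, δ (a * b) = a * δ b + b * δ a) :
    -- (1) the module axioms for `dsmul δ` on `V × V`
    (∀ p : V × V, dsmul δ 1 p = p) ∧
    (∀ (a b : k) (p : V × V), dsmul δ (a * b) p = dsmul δ a (dsmul δ b p)) ∧
    (∀ (a : k) (p q : V × V), dsmul δ a (p + q) = dsmul δ a p + dsmul δ a q) ∧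
    (∀ (a b : k) (p : V × V), dsmul δ (a + b) p = dsmul δ a p + dsmul δ b p) ∧
    (∀ p : V × V, dsmul δ 0 p = 0) ∧
    (∀ a : k, dsmul δ a (0 : V × V) = 0) ∧
    -- (2) `ι : v ↦ (v, 0)` is `k`-linear, `d : v ↦ (0, v)` is additive and is a
    --     derivation relative to `ι`
    (∀ u v : V, ((u + v, 0) : V × V) = (u, 0) + (v, 0)) ∧
    (∀ (a : k) (v : V), ((a • v, 0) : V × V) = dsmul δ a (v, 0)) ∧
    (∀ u v : V, ((0, u + v) : V × V) = (0, u) + (0, v)) ∧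
    (∀ (a : k) (v : V),
      ((0, a • v) : V × V) = dsmul δ (δ a) (v, 0) + dsmul δ a (0, v)) ∧
    -- (3) the universal property
    (∀ (W : Type*) [AddCommGroup W] [Module k W] (i : V →ₗ[k] W) (D : V → W),
      (∀ u v : V, D (u + v) = D u + D v) →
      (∀ (a : k) (v : V), D (a • v) = δ a • i v + a • D v) →
      ∃! φ : V × V → W,
        (∀ p q : V × V, φ (p + q) = φ p + φ q) ∧
        (∀ (a : k) (p : V × V), φ (dsmul δ a p) = a • φ p) ∧
        (∀ v : V, φ (v, 0) = i v) ∧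
        (∀ v : V, φ (0, v) = D v)) := by
  refine ⟨dsmul_one hδmul, dsmul_mul hδmul, dsmul_add, add_dsmul hδadd, zero_dsmul hδmul,
    dsmul_zero, fun u v => by simp, fun a v => (dsmul_inl a v).symm, fun u v => by simp,
    inr_smul_eq_dsmul_inl_add_dsmul_inr, ?_⟩
  intro W _ _ i D hDadd hD
  let D' : V →+ W := AddMonoidHom.mk' D hDadd
  refine ⟨dsmulLift i D', ⟨dsmulLift_add i D', dsmulLift_dsmul i D' hD, dsmulLift_inl i D',
    dsmulLift_inr i D'⟩, ?_⟩
  rintro φ ⟨hadd, -, hinl, hinr⟩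
  funext p
  rw [map_eq_map_inl_add_map_inr hadd p, hinl, hinr]
  rfl
end

section
/- Let k be a commutative ring, δ : k → k a derivation, M a k-module, d : M → M a δ-derivation, and let D be the unique additive self-map of TensorAlgebra k M that satisfies the Leibniz rule D(x·y) = D(x)·y + x·D(y), sends algebraMap a to algebraMap (δ a), and satisfies D(ι m) = ι(d m). Let I be the two-sided ideal of TensorAlgebra k M generated by the elements ι(m)·ι(n) − ι(n)·ι(m) for m, n ∈ M. Then D(I) ⊆ I; consequently D descends to an additive map on the quotient algebra (TensorAlgebra k M) ⧸ I (the symmetric algebra of M) that satisfies the Leibniz rule, sends the image of algebraMap a to the image of algebraMap (δ a), and sends the image of ι(m) to the image of ι(d m). -/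
/-!
A derivation `D` of a ring preserves the two-sided ideal generated by a set `s` as soon as it
maps `s` into that ideal, because the Leibniz rule turns `D (a * x * b)` into a sum of terms each
containing `x` or `D x`. For the symmetric algebra, `s` consists of the commutators `[ι m, ι n]`,
and the Leibniz rule gives `D [ι m, ι n] = [ι (d m), ι n] + [ι m, ι (d n)]`. Once `D I ⊆ I`,
`D` is compatible with the congruence of `I` and descends to the quotient.
-/

namespace TwoSidedIdeal

variable {R : Type*} [Ring R]

theorem map_mem_span_of_leibniz (D : R →+ R) (hD : ∀ x y, D (x * y) = D x * y + x * D y)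
    {s : Set R} (hs : ∀ x ∈ s, D x ∈ span s) {x : R} (hx : x ∈ span s) : D x ∈ span s := by
  induction hx using span_induction with
  | mem x hx => exact hs x hx
  | zero => simp
  | add x y _ _ hx hy => simpa using add_mem _ hx hy
  | neg x _ hx => simpa using neg_mem _ hx
  | left_absorb a x hx hDx =>
    rw [hD]; exact add_mem _ (mul_mem_left _ _ _ hx) (mul_mem_left _ _ _ hDx)
  | right_absorb b x hx hDx =>
    rw [hD]; exact add_mem _ (mul_mem_right _ _ _ hDx) (mul_mem_right _ _ _ hx)

theorem exists_quotient_lift_of_leibniz (I : TwoSidedIdeal R) (D : R →+ R)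
    (hD : ∀ x y, D (x * y) = D x * y + x * D y) (hI : ∀ x ∈ I, D x ∈ I) :
    ∃ Dbar : I.ringCon.Quotient → I.ringCon.Quotient,
      (∀ x, Dbar (RingCon.mk' I.ringCon x) = RingCon.mk' I.ringCon (D x)) ∧
      (∀ u v, Dbar (u + v) = Dbar u + Dbar v) ∧
      (∀ u v, Dbar (u * v) = Dbar u * v + u * Dbar v) := by
  have hD_rel : ∀ a b, I.ringCon a b → I.ringCon (D a) (D b) := fun a b hab => by
    rw [rel_iff] at hab ⊢
    simpa only [map_sub] using hI _ hab
  refine ⟨Quotient.map D hD_rel, fun _ => rfl, ?_, ?_⟩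
  · rintro ⟨x⟩ ⟨y⟩
    exact congrArg (RingCon.mk' I.ringCon) (map_add D x y)
  · rintro ⟨x⟩ ⟨y⟩
    exact congrArg (RingCon.mk' I.ringCon) (hD x y)

end TwoSidedIdeal

theorem map_commutator_of_leibniz {R : Type*} [Ring R] (D : R →+ R)
    (hD : ∀ x y, D (x * y) = D x * y + x * D y) (a b : R) :
    D (a * b - b * a) = (D a * b - b * D a) + (a * D b - D b * a) := by
  rw [map_sub, hD, hD]
  abel

theorem derivation_descends_to_symmetric_algebra_general
    {k M : Type*} [CommRing k] [AddCommGroup M] [Module k M]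
    (δ : k → k)
    (d : M → M)
    (D : TensorAlgebra k M → TensorAlgebra k M)
    (hDadd : ∀ x y : TensorAlgebra k M, D (x + y) = D x + D y)
    (hDmul : ∀ x y : TensorAlgebra k M, D (x * y) = D x * y + x * D y)
    (hDalg : ∀ a : k, D (algebraMap k (TensorAlgebra k M) a)
      = algebraMap k (TensorAlgebra k M) (δ a))
    (hDι : ∀ m : M, D (TensorAlgebra.ι k m) = TensorAlgebra.ι k (d m))
    -- `I` is the two-sided ideal generated by the commutators
    (I : TwoSidedIdeal (TensorAlgebra k M))
    (hI : I = TwoSidedIdeal.span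
      {x : TensorAlgebra k M | ∃ m n : M,
        x = TensorAlgebra.ι k m * TensorAlgebra.ι k n
          - TensorAlgebra.ι k n * TensorAlgebra.ι k m}) :
    -- `D` maps `I` into `I` ...
    (∀ x : TensorAlgebra k M, x ∈ I → D x ∈ I) ∧
    -- ... hence descends to the quotient algebra `(TensorAlgebra k M) ⧸ I`
    ∃ Dbar : I.ringCon.Quotient → I.ringCon.Quotient,
      (∀ x : TensorAlgebra k M,
        Dbar (RingCon.mk' I.ringCon x) = RingCon.mk' I.ringCon (D x)) ∧
      (∀ u v : I.ringCon.Quotient, Dbar (u + v) = Dbar u + Dbar v) ∧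
      (∀ u v : I.ringCon.Quotient, Dbar (u * v) = Dbar u * v + u * Dbar v) ∧
      (∀ a : k, Dbar (RingCon.mk' I.ringCon (algebraMap k (TensorAlgebra k M) a))
        = RingCon.mk' I.ringCon (algebraMap k (TensorAlgebra k M) (δ a))) ∧
      (∀ m : M, Dbar (RingCon.mk' I.ringCon (TensorAlgebra.ι k m))
        = RingCon.mk' I.ringCon (TensorAlgebra.ι k (d m))) := by
  have hD_mem : ∀ x ∈ I, D x ∈ I := by
    subst hI
    refine fun x hx => TwoSidedIdeal.map_mem_span_of_leibniz (.mk' D hDadd) hDmul ?_ hx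
    rintro _ ⟨m, n, rfl⟩
    rw [map_commutator_of_leibniz _ hDmul]
    simp only [AddMonoidHom.mk'_apply, hDι]
    exact TwoSidedIdeal.add_mem _ (TwoSidedIdeal.subset_span ⟨d m, n, rfl⟩)
      (TwoSidedIdeal.subset_span ⟨m, d n, rfl⟩)
  obtain ⟨Dbar, hDbar_mk, hDbar_add, hDbar_mul⟩ :=
    I.exists_quotient_lift_of_leibniz (.mk' D hDadd) hDmul hD_mem
  refine ⟨hD_mem, Dbar, hDbar_mk, hDbar_add, hDbar_mul, fun a => ?_, fun m => ?_⟩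
  · rw [hDbar_mk, AddMonoidHom.mk'_apply, hDalg]
  · rw [hDbar_mk, AddMonoidHom.mk'_apply, hDι]

/-- **The derivation descends to the symmetric algebra.**
Let `δ` be a derivation on a commutative ring `k`, `M` a `k`-module,
`d : M → M` a `δ`-derivation, and `D` the induced derivation on
`TensorAlgebra k M`.  Let `I` be the two-sided ideal generated by the
commutators `ι m * ι n - ι n * ι m`.  Then `D I ⊆ I`, and `D` descends to an
additive map on the quotient algebra `(TensorAlgebra k M) ⧸ I` (the symmetric
algebra) satisfying the Leibniz rule and compatible with `algebraMap` and
`ι`. -/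
theorem derivation_descends_to_symmetric_algebra
    {k M : Type*} [CommRing k] [AddCommGroup M] [Module k M]
    (δ : k → k)
    (hδadd : ∀ a b : k, δ (a + b) = δ a + δ b)
    (hδmul : ∀ a b : k, δ (a * b) = a * δ b + b * δ a)
    (d : M → M)
    (hdadd : ∀ x y : M, d (x + y) = d x + d y)
    (hd : ∀ (a : k) (m : M), d (a • m) = δ a • m + a • d m)
    (D : TensorAlgebra k M → TensorAlgebra k M)
    (hDadd : ∀ x y : TensorAlgebra k M, D (x + y) = D x + D y)
    (hDmul : ∀ x y : TensorAlgebra k M, D (x * y) = D x * y + x * D y)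
    (hDalg : ∀ a : k, D (algebraMap k (TensorAlgebra k M) a)
      = algebraMap k (TensorAlgebra k M) (δ a))
    (hDι : ∀ m : M, D (TensorAlgebra.ι k m) = TensorAlgebra.ι k (d m))
    -- `I` is the two-sided ideal generated by the commutators
    (I : TwoSidedIdeal (TensorAlgebra k M))
    (hI : I = TwoSidedIdeal.span
      {x : TensorAlgebra k M | ∃ m n : M,
        x = TensorAlgebra.ι k m * TensorAlgebra.ι k n
          - TensorAlgebra.ι k n * TensorAlgebra.ι k m}) :
    -- `D` maps `I` into `I` ...
    (∀ x : TensorAlgebra k M, x ∈ I → D x ∈ I) ∧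
    -- ... hence descends to the quotient algebra `(TensorAlgebra k M) ⧸ I`
    ∃ Dbar : I.ringCon.Quotient → I.ringCon.Quotient,
      (∀ x : TensorAlgebra k M,
        Dbar (RingCon.mk' I.ringCon x) = RingCon.mk' I.ringCon (D x)) ∧
      (∀ u v : I.ringCon.Quotient, Dbar (u + v) = Dbar u + Dbar v) ∧
      (∀ u v : I.ringCon.Quotient, Dbar (u * v) = Dbar u * v + u * Dbar v) ∧
      (∀ a : k, Dbar (RingCon.mk' I.ringCon (algebraMap k (TensorAlgebra k M) a))
        = RingCon.mk' I.ringCon (algebraMap k (TensorAlgebra k M) (δ a))) ∧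
      (∀ m : M, Dbar (RingCon.mk' I.ringCon (TensorAlgebra.ι k m))
        = RingCon.mk' I.ringCon (TensorAlgebra.ι k (d m))) :=
  derivation_descends_to_symmetric_algebra_general δ d D hDadd hDmul hDalg hDι I hI
end

section
/- Let k be a commutative ring, E a k-module, i : k → E an injective k-linear map, and p : E → k a surjective k-linear map with range i = ker p. Let D : k → End_k(E) be a ring homomorphism into the ring of k-linear endomorphisms of E (under composition), such that for all a, b ∈ k and all x ∈ E: D(a)(i b) = i(a·b) and p(D(a)(x)) = a·p(x). Then there exists a unique function δ : k → k such that D(a)(x) = a·x + δ(a)·i(p x) for all a ∈ k and x ∈ E; moreover, δ is a derivation on k: it is additive and satisfies δ(a·b) = a·δ(b) + b·δ(a) for all a, b ∈ k. -/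
/-! For each `a`, the endomorphism `D a - a • id` kills `i k` and is killed by `p`, so by exactness
it factors as `δ a • (i ∘ₗ p)`. Thus `D` takes values of the form `a + δ a • N` with `N = i ∘ₗ p`
and `N * N = 0`; multiplicativity of `D` in this "dual number" form is exactly the Leibniz rule. -/

section DualNumberValued

variable {k A : Type*} [CommRing k] [Ring A] [Algebra k A] {N : A}
  {D : k →+* A} {δ : k → k}

theorem map_add_of_ringHom_eq_algebraMap_add_smul
    (hN : Function.Injective fun c : k => c • N)
    (hD : ∀ a, D a = algebraMap k A a + δ a • N) (a b : k) :
    δ (a + b) = δ a + δ b := hN <| by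
  have h := D.map_add a b
  simp only [hD, map_add] at h
  linear_combination (norm := module) h

theorem map_mul_of_ringHom_eq_algebraMap_add_smul
    (hN : Function.Injective fun c : k => c • N) (hNN : N * N = 0)
    (hD : ∀ a, D a = algebraMap k A a + δ a • N) (a b : k) :
    δ (a * b) = a * δ b + b * δ a := hN <| by
  have h := D.map_mul a b
  simp only [hD, map_mul, Algebra.algebraMap_eq_smul_one, add_mul, mul_add, smul_mul_smul_comm,
    one_mul, mul_one, hNN, smul_zero, add_zero] at h
  linear_combination (norm := module) h

end DualNumberValued

section Extension

variable {k E : Type*} [CommRing k] [AddCommGroup E] [Module k E]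
  {i : k →ₗ[k] E} {p : E →ₗ[k] k}

theorem exists_eq_smul_comp_of_comp_eq_zero (hp : Function.Surjective p)
    (hip : LinearMap.range i = LinearMap.ker p) {f : Module.End k E}
    (hfi : f ∘ₗ i = 0) (hpf : p ∘ₗ f = 0) : ∃ c : k, f = c • (i ∘ₗ p) := by
  obtain ⟨e, he⟩ := hp 1
  obtain ⟨c, hc⟩ : f e ∈ LinearMap.range i := hip ▸ LinearMap.congr_fun hpf e
  refine ⟨c, LinearMap.ext fun x => ?_⟩
  obtain ⟨b, hb⟩ : x - p x • e ∈ LinearMap.range i := hip ▸ by simp [he]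
  have hx : f x = p x • f e := by
    rw [← sub_eq_zero, ← map_smul, ← map_sub, ← hb]
    exact LinearMap.congr_fun hfi b
  simp [hx, ← hc, ← map_smul, mul_comm]

theorem smul_comp_injective (hi : Function.Injective i) (hp : Function.Surjective p) :
    Function.Injective fun c : k => c • (i ∘ₗ p) := by
  obtain ⟨e, he⟩ := hp 1
  intro c c' h
  apply hi
  simpa [he, ← map_smul] using LinearMap.congr_fun h e

theorem comp_mul_comp_eq_zero (hip : LinearMap.range i = LinearMap.ker p) :
    (i ∘ₗ p) * (i ∘ₗ p) = 0 := by
  have : p ∘ₗ i = 0 := (LinearMap.exact_iff.mpr hip.symm).linearMap_comp_eq_zero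
  ext x
  simp [Module.End.mul_apply, ← LinearMap.comp_apply p i, this]

end Extension

/-- **A differential structure on the unit induces a derivation on
`k = End(𝟙)`.**
Let `k` be a commutative ring, `E` a `k`-module fitting in an exact sequence
`0 → k → E → k → 0` (via `i` and `p`), and `D : k →+* End_k E` a ring
homomorphism with `D a (i b) = i (a * b)` and `p (D a x) = a * p x`.  Then
there is a unique function `δ : k → k` with
`D a x = a • x + δ a • i (p x)`, and `δ` is a derivation on `k`. -/
theorem differential_structure_gives_derivation
    {k E : Type*} [CommRing k] [AddCommGroup E] [Module k E]
    (i : k →ₗ[k] E) (p : E →ₗ[k] k)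
    (hi : Function.Injective i) (hp : Function.Surjective p)
    (hip : LinearMap.range i = LinearMap.ker p)
    (D : k →+* Module.End k E)
    (hDi : ∀ a b : k, D a (i b) = i (a * b))
    (hDp : ∀ (a : k) (x : E), p (D a x) = a * p x) :
    ∃ δ : k → k,
      -- the defining property of `δ`
      (∀ (a : k) (x : E), D a x = a • x + δ a • i (p x)) ∧
      -- uniqueness
      (∀ δ' : k → k, (∀ (a : k) (x : E), D a x = a • x + δ' a • i (p x)) →
        δ' = δ) ∧
      -- `δ` is a derivation on `k`
      (∀ a b : k, δ (a + b) = δ a + δ b) ∧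
      (∀ a b : k, δ (a * b) = a * δ b + b * δ a) := by
  have hN := smul_comp_injective hi hp
  have hT (a : k) : ∃ c : k, D a - algebraMap k _ a = c • (i ∘ₗ p) :=
    exists_eq_smul_comp_of_comp_eq_zero hp hip
      (LinearMap.ext fun b => by simp [hDi, ← map_smul])
      (LinearMap.ext fun x => by simp [hDp])
  choose δ hδ using hT
  have hD (a : k) : D a = algebraMap k _ a + δ a • (i ∘ₗ p) := by rw [← hδ]; abel
  have hD_iff (δ' : k → k) :
      (∀ (a : k) (x : E), D a x = a • x + δ' a • i (p x)) ↔
        ∀ a, D a = algebraMap k _ a + δ' a • (i ∘ₗ p) := by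
    simp only [LinearMap.ext_iff]; rfl
  refine ⟨δ, (hD_iff δ).mpr hD, fun δ' hδ' => funext fun a => hN ?_,
    map_add_of_ringHom_eq_algebraMap_add_smul hN hD,
    map_mul_of_ringHom_eq_algebraMap_add_smul hN (comp_mul_comp_eq_zero hip) hD⟩
  simpa [hD] using ((hD_iff δ').mp hδ' a).symm
end
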